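/- arXiv:1803.03315 — 4 statements merged into one kernel-verified Lean document; each statement's English description precedes it below -/
import Mathlib

section
/- Let G be a finite simple (P_7, C_4, C_5)-free graph, and let H = x_0, x_1, ..., x_6, x_0 (indices in ℤ7) be a 7-hole in G. For each i ∈ ℤ7, let A_i = { x ∈ V(G) : N[x] ∩ V(H) = {x_{i−1}, x_i, x_{i+1}} }, where N[x] denotes the closed neighborhood of x. Let B be the subgraph of G induced by the union of the sets A_i. Then B is a 7-bracelet and {A_i}_{i∈ℤ7} is a good partition for it. -/
open SimpleGraph

namespace Paper

variable {V : Type*}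

/-- `X` is complete to `Y` in `G`. -/
def CompleteTo (G : SimpleGraph V) (X Y : Set V) : Prop :=
  ∀ x ∈ X, ∀ y ∈ Y, G.Adj x y

/-- `X` is anticomplete to `Y` in `G`. -/
def AnticompleteTo (G : SimpleGraph V) (X Y : Set V) : Prop :=
  ∀ x ∈ X, ∀ y ∈ Y, ¬ G.Adj x y

/-- Closed neighborhood of `v` inside the induced subgraph of `G` on `S`. -/
def cnbr (G : SimpleGraph V) (S : Set V) (v : V) : Set V :=
  {w | w ∈ S ∧ (w = v ∨ G.Adj v w)}

/-- Neighbors of `v` inside the set `X`. -/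
def nbrIn (G : SimpleGraph V) (X : Set V) (v : V) : Set V :=
  {w | w ∈ X ∧ G.Adj v w}

/-- `G` is a complete graph. -/
def IsCompleteGraph (G : SimpleGraph V) : Prop :=
  ∀ u v : V, u ≠ v → G.Adj u v

/-- The induced subgraph of `G` on `S` admits a clique-cutset: a (possibly empty) clique
`C ⊊ S` such that removing `C` from the induced subgraph on `S` disconnects it. -/
def HasCliqueCutsetOn (G : SimpleGraph V) (S : Set V) : Prop :=
  ∃ C : Set V, C ⊆ S ∧ C ≠ S ∧ G.IsClique C ∧ ¬ (G.induce (S \ C)).Connected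

def HasCliqueCutset (G : SimpleGraph V) : Prop :=
  HasCliqueCutsetOn G Set.univ

/-- The induced subgraph of `G` on `S` contains an induced copy of `H`. -/
def ContainsInducedOn {W : Type*} (G : SimpleGraph V) (S : Set V) (H : SimpleGraph W) : Prop :=
  ∃ f : W ↪ V, (∀ a, f a ∈ S) ∧ ∀ a b, G.Adj (f a) (f b) ↔ H.Adj a b

/-- The induced subgraph of `G` on `S` is `H`-free. -/
def FreeOn {W : Type*} (G : SimpleGraph V) (S : Set V) (H : SimpleGraph W) : Prop :=
  ¬ ContainsInducedOn G S H

/-- `G` is `H`-free. -/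
def Free {W : Type*} (G : SimpleGraph V) (H : SimpleGraph W) : Prop :=
  FreeOn G Set.univ H

/-- The path on `n` vertices. -/
def pathG (n : ℕ) : SimpleGraph (Fin n) :=
  SimpleGraph.fromRel (fun i j => (i : ℕ) + 1 = (j : ℕ))

/-- The cycle on `n` vertices. -/
def cycG (n : ℕ) : SimpleGraph (ZMod n) :=
  SimpleGraph.fromRel (fun i j => i + 1 = j)

/-- The graph `Θ₃ʳ`: `r` internally disjoint three-edge paths meeting at their endpoints.
`Sum.inl 0` and `Sum.inl 1` are the two endpoints, and `Sum.inr (i, 0)`, `Sum.inr (i, 1)`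
are the internal vertices of the `i`-th path. -/
def thetaG (r : ℕ) : SimpleGraph (Fin 2 ⊕ Fin r × Fin 2) :=
  SimpleGraph.fromRel (fun x y =>
    (∃ i : Fin r, x = Sum.inl 0 ∧ y = Sum.inr (i, 0)) ∨
    (∃ i : Fin r, x = Sum.inr (i, 0) ∧ y = Sum.inr (i, 1)) ∨
    (∃ i : Fin r, x = Sum.inr (i, 1) ∧ y = Sum.inl 1))

/-- `B` is the vertex set of an anticomponent of `G`. -/
def IsAnticomponent (G : SimpleGraph V) (B : Set V) : Prop :=
  ∃ c : Gᶜ.ConnectedComponent, B = c.supp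

/-- `G` has exactly one nontrivial anticomponent, and that anticomponent satisfies `P`. -/
def ExactlyOneNontrivialAnticomponent (G : SimpleGraph V) (P : Set V → Prop) : Prop :=
  ∃ B : Set V, IsAnticomponent G B ∧ B.Nontrivial ∧
    (∀ B' : Set V, IsAnticomponent G B' → B'.Nontrivial → B' = B) ∧ P B

/-- The stability number of the induced subgraph of `G` on `S`. -/
noncomputable def alphaOn (G : SimpleGraph V) (S : Set V) : ℕ :=
  sSup {n | ∃ T : Finset V, ↑T ⊆ S ∧ (∀ x ∈ T, ∀ y ∈ T, x ≠ y → ¬ G.Adj x y) ∧ T.card = n}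

/-- The clique number of `G`. -/
noncomputable def cliqueNumber (G : SimpleGraph V) : ℕ :=
  sSup {n | ∃ T : Finset V, G.IsNClique n T}

/-- A 7-hole in `G`, given by an injective map `x : ZMod 7 → V` whose image induces a `C₇`
traversed in the order `x 0, x 1, …, x 6, x 0`. -/
def IsHole7 (G : SimpleGraph V) (x : ZMod 7 → V) : Prop :=
  Function.Injective x ∧ ∀ i j, G.Adj (x i) (x j) ↔ (i - j = 1 ∨ j - i = 1)

/-- The set `A_i^*`: vertices of `A i` anticomplete to `A (i-2) ∪ A (i+2)`. -/
def braceletStar (G : SimpleGraph V) (A : ZMod 7 → Set V) (i : ZMod 7) : Set V :=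
  {v | v ∈ A i ∧ ∀ w ∈ A (i - 2) ∪ A (i + 2), ¬ G.Adj v w}

/-- The set `A_i^+`: vertices of `A i` anticomplete to `A (i-2)` with a neighbor in `A (i+2)`. -/
def braceletPlus (G : SimpleGraph V) (A : ZMod 7 → Set V) (i : ZMod 7) : Set V :=
  {v | v ∈ A i ∧ (∀ w ∈ A (i - 2), ¬ G.Adj v w) ∧ ∃ w ∈ A (i + 2), G.Adj v w}

/-- The set `A_i^-`: vertices of `A i` anticomplete to `A (i+2)` with a neighbor in `A (i-2)`. -/
def braceletMinus (G : SimpleGraph V) (A : ZMod 7 → Set V) (i : ZMod 7) : Set V :=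
  {v | v ∈ A i ∧ (∀ w ∈ A (i + 2), ¬ G.Adj v w) ∧ ∃ w ∈ A (i - 2), G.Adj v w}

/-- The induced subgraph of `G` on `S` is a 7-bracelet with good pair `(A, istar)`. -/
def IsGoodPairOn (G : SimpleGraph V) (S : Set V) (A : ZMod 7 → Set V) (istar : ZMod 7) : Prop :=
  -- `A` is a partition of `S`
  (⋃ i, A i) = S ∧
  (∀ i j : ZMod 7, i ≠ j → Disjoint (A i) (A j)) ∧
  -- (I)
  (∀ i, (A i).Nonempty ∧ G.IsClique (A i) ∧
    CompleteTo G (A i) (A (i - 1) ∪ A (i + 1)) ∧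
    AnticompleteTo G (A i) (A (i - 3) ∪ A (i + 3))) ∧
  -- (II) (a)-(c): `A i` is partitioned into the canonical sets `A_i^*, A_i^+, A_i^-`
  (∀ i, A i = braceletStar G A i ∪ braceletPlus G A i ∪ braceletMinus G A i) ∧
  -- (II) (d),(e): closed neighborhoods (in the induced subgraph on `S`) of vertices of
  -- `A_i^+` (resp. `A_i^-`) form a chain under inclusion
  (∀ i, ∀ u ∈ braceletPlus G A i, ∀ v ∈ braceletPlus G A i,
    cnbr G S u ⊆ cnbr G S v ∨ cnbr G S v ⊆ cnbr G S u) ∧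
  (∀ i, ∀ u ∈ braceletMinus G A i, ∀ v ∈ braceletMinus G A i,
    cnbr G S u ⊆ cnbr G S v ∨ cnbr G S v ⊆ cnbr G S u) ∧
  -- (II) (f)
  (∀ i, ∃ v ∈ A i, (∃ w ∈ A (i - 2), ¬ G.Adj v w) ∧ ∃ w ∈ A (i + 2), ¬ G.Adj v w) ∧
  -- (III)
  braceletPlus G A (istar - 3) = ∅ ∧ braceletMinus G A (istar - 3) = ∅ ∧
  braceletPlus G A (istar + 3) = ∅ ∧ braceletMinus G A (istar + 3) = ∅ ∧
  -- (IV)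
  braceletMinus G A (istar - 2) = ∅ ∧ braceletPlus G A (istar + 2) = ∅ ∧
  -- (V)
  braceletMinus G A (istar - 1) = ∅ ∧ braceletPlus G A (istar + 1) = ∅

def IsGoodPartitionOn (G : SimpleGraph V) (S : Set V) (A : ZMod 7 → Set V) : Prop :=
  ∃ istar, IsGoodPairOn G S A istar

/-- The induced subgraph of `G` on `S` is a 7-bracelet. -/
def IsBracelet7On (G : SimpleGraph V) (S : Set V) : Prop :=
  ∃ A istar, IsGoodPairOn G S A istar

/-- The induced subgraph of `G` on `S` is a quasi-7-bracelet with good partition `A`. -/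
def IsQuasiGoodPartitionOn (G : SimpleGraph V) (S : Set V) (A : ZMod 7 → Set V) : Prop :=
  (⋃ i, A i) = S ∧
  (∀ i j : ZMod 7, i ≠ j → Disjoint (A i) (A j)) ∧
  (∀ i, (A i).Nonempty ∧ G.IsClique (A i) ∧
    CompleteTo G (A i) (A (i - 1) ∪ A (i + 1)) ∧
    AnticompleteTo G (A i) (A (i - 3) ∪ A (i + 3))) ∧
  (∀ i, ∃ v ∈ A i, (∃ w ∈ A (i - 2), ¬ G.Adj v w) ∧ ∃ w ∈ A (i + 2), ¬ G.Adj v w)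

/-- The induced subgraph of `G` on `S` is a thickened emerald with good triple `(A, C, istar)`.
Here `Em, Ep, Ps, Pm, Ms, Mp` play the roles of
`A_{i*}^-, A_{i*}^+, A_{i*+2}^*, A_{i*+2}^-, A_{i*-2}^*, A_{i*-2}^+`. -/
def IsGoodTripleTEOn (G : SimpleGraph V) (S : Set V) (A : ZMod 7 → Set V)
    (C : Set V) (istar : ZMod 7) : Prop :=
  (C ∪ ⋃ i, A i) = S ∧
  (∀ i, Disjoint C (A i)) ∧
  (∀ i j : ZMod 7, i ≠ j → Disjoint (A i) (A j)) ∧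
  C.Nonempty ∧ G.IsClique C ∧
  (∀ i, (A i).Nonempty ∧ G.IsClique (A i)) ∧
  (∀ i, CompleteTo G (A i) (A (i - 1) ∪ A (i + 1)) ∧
        AnticompleteTo G (A i) (A (i - 3) ∪ A (i + 3))) ∧
  (∀ i, (i = istar - 3 ∨ i = istar - 1 ∨ i = istar + 1 ∨ i = istar + 3) →
        AnticompleteTo G (A i) (A (i - 2) ∪ A (i + 2))) ∧
  ∃ Em Ep Ps Pm Ms Mp : Set V,
    Em.Nonempty ∧ Ep.Nonempty ∧ Ps.Nonempty ∧ Pm.Nonempty ∧ Ms.Nonempty ∧ Mp.Nonempty ∧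
    List.Pairwise (fun X Y : Set V => Disjoint X Y) [Em, Ep, Ps, Pm, Ms, Mp] ∧
    G.IsClique Em ∧ G.IsClique Ep ∧ G.IsClique Ps ∧ G.IsClique Pm ∧
    G.IsClique Ms ∧ G.IsClique Mp ∧
    A istar = Em ∪ Ep ∧
    A (istar + 2) = Ps ∪ Pm ∧
    A (istar - 2) = Ms ∪ Mp ∧
    CompleteTo G Em Mp ∧ AnticompleteTo G Em (Ms ∪ A (istar + 2)) ∧
    CompleteTo G Ep Pm ∧ AnticompleteTo G Ep (Ps ∪ A (istar - 2)) ∧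
    CompleteTo G C (Ps ∪ A (istar + 3) ∪ A (istar - 3) ∪ Ms) ∧
    AnticompleteTo G C (Mp ∪ A (istar - 1) ∪ A istar ∪ A (istar + 1) ∪ Pm)

/-- The induced subgraph of `G` on `S` is a thickened emerald. -/
def IsThickenedEmeraldOn (G : SimpleGraph V) (S : Set V) : Prop :=
  ∃ A C istar, IsGoodTripleTEOn G S A C istar

/-- The neighborhoods in `Y` of the vertices of `X` form a chain under inclusion whose
largest element is all of `Y`: this encodes "`X` can be ordered as `x_1, …, x_t` so that
`N[x_t] ∩ Y ⊆ ⋯ ⊆ N[x_1] ∩ Y = Y`". -/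
def ChainedPairTo (G : SimpleGraph V) (X Y : Set V) : Prop :=
  (∀ u ∈ X, ∀ v ∈ X, nbrIn G Y u ⊆ nbrIn G Y v ∨ nbrIn G Y v ⊆ nbrIn G Y u) ∧
  (∃ u ∈ X, ∀ y ∈ Y, G.Adj u y)

/-- The induced subgraph of `G` on `S` is an `r`-lantern with good partition
`(A, Bs 0, …, Bs (r-1), Cs 0, …, Cs (r-1), D)`, where the index `0 : Fin r` plays the role
of the index `1` of the paper. -/
def IsLanternPartitionOn (G : SimpleGraph V) (S : Set V) (r : ℕ)
    (A D : Set V) (Bs Cs : Fin r → Set V) : Prop :=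
  (A ∪ D ∪ (⋃ i, Bs i) ∪ (⋃ i, Cs i)) = S ∧
  Disjoint A D ∧
  (∀ i, Disjoint A (Bs i) ∧ Disjoint A (Cs i) ∧ Disjoint D (Bs i) ∧ Disjoint D (Cs i)) ∧
  (∀ i j, Disjoint (Bs i) (Cs j)) ∧
  (∀ i j, i ≠ j → Disjoint (Bs i) (Bs j) ∧ Disjoint (Cs i) (Cs j)) ∧
  A.Nonempty ∧ D.Nonempty ∧ (∀ i, (Bs i).Nonempty ∧ (Cs i).Nonempty) ∧
  G.IsClique A ∧ G.IsClique D ∧ (∀ i, G.IsClique (Bs i) ∧ G.IsClique (Cs i)) ∧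
  AnticompleteTo G A D ∧
  (∀ i, CompleteTo G A (Bs i) ∧ AnticompleteTo G A (Cs i)) ∧
  (∀ i, CompleteTo G D (Cs i) ∧ AnticompleteTo G D (Bs i)) ∧
  (∀ i : Fin r, i.val = 0 → ChainedPairTo G (Bs i) (Cs i) ∧ ChainedPairTo G (Cs i) (Bs i)) ∧
  (∀ i : Fin r, i.val ≠ 0 → CompleteTo G (Bs i) (Cs i)) ∧
  (∀ i j, i ≠ j → AnticompleteTo G (Bs i ∪ Cs i) (Bs j ∪ Cs j))

/-- The induced subgraph of `G` on `S` is a lantern. -/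
def IsLanternOn (G : SimpleGraph V) (S : Set V) : Prop :=
  ∃ r : ℕ, 3 ≤ r ∧ ∃ (A D : Set V) (Bs Cs : Fin r → Set V),
    IsLanternPartitionOn G S r A D Bs Cs

/-- The induced subgraph of `G` on `S` is a thickened `Θ₃ʳ` with good partition
`(A, Bs, Cs, D)`. -/
def IsThickThetaPartitionOn (G : SimpleGraph V) (S : Set V) (r : ℕ)
    (A D : Set V) (Bs Cs : Fin r → Set V) : Prop :=
  (A ∪ D ∪ (⋃ i, Bs i) ∪ (⋃ i, Cs i)) = S ∧
  Disjoint A D ∧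
  (∀ i, Disjoint A (Bs i) ∧ Disjoint A (Cs i) ∧ Disjoint D (Bs i) ∧ Disjoint D (Cs i)) ∧
  (∀ i j, Disjoint (Bs i) (Cs j)) ∧
  (∀ i j, i ≠ j → Disjoint (Bs i) (Bs j) ∧ Disjoint (Cs i) (Cs j)) ∧
  A.Nonempty ∧ D.Nonempty ∧ (∀ i, (Bs i).Nonempty ∧ (Cs i).Nonempty) ∧
  G.IsClique A ∧ G.IsClique D ∧ (∀ i, G.IsClique (Bs i) ∧ G.IsClique (Cs i)) ∧
  AnticompleteTo G A D ∧
  (∀ i, CompleteTo G A (Bs i) ∧ AnticompleteTo G A (Cs i)) ∧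
  (∀ i, CompleteTo G D (Cs i) ∧ AnticompleteTo G D (Bs i)) ∧
  (∀ i, CompleteTo G (Bs i) (Cs i)) ∧
  (∀ i j, i ≠ j → AnticompleteTo G (Bs i ∪ Cs i) (Bs j ∪ Cs j))

/-- The induced subgraph of `G` on `S` is a `k`-ring with partition `X`. -/
def IsRingPartitionOn (G : SimpleGraph V) (S : Set V) (k : ℕ) (X : ZMod k → Set V) : Prop :=
  (⋃ i, X i) = S ∧
  (∀ i j : ZMod k, i ≠ j → Disjoint (X i) (X j)) ∧
  (∀ i, (X i).Nonempty) ∧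
  (∀ i, ∀ u ∈ X i, X i ⊆ cnbr G S u) ∧
  (∀ i, ∀ u ∈ X i, cnbr G S u ⊆ X (i - 1) ∪ X i ∪ X (i + 1)) ∧
  (∀ i, ∃ u ∈ X i, cnbr G S u = X (i - 1) ∪ X i ∪ X (i + 1)) ∧
  (∀ i, ∀ u ∈ X i, ∀ v ∈ X i, cnbr G S u ⊆ cnbr G S v ∨ cnbr G S v ⊆ cnbr G S u)

/-- The induced subgraph of `G` on `S` is a ring (of some length `k ≥ 4`). -/
def IsRingOn (G : SimpleGraph V) (S : Set V) : Prop :=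
  ∃ k : ℕ, 4 ≤ k ∧ ∃ X : ZMod k → Set V, IsRingPartitionOn G S k X

/-- The induced subgraph of `G` on `S` is a 6-ring. -/
def IsRing6On (G : SimpleGraph V) (S : Set V) : Prop :=
  ∃ X : ZMod 6 → Set V, IsRingPartitionOn G S 6 X

/-- The induced subgraph of `G` on `S` is a 6-wreath. -/
def IsWreath6On (G : SimpleGraph V) (S : Set V) : Prop :=
  ∃ X : ZMod 6 → Set V, IsRingPartitionOn G S 6 X ∧
    CompleteTo G (X 0) (X 1) ∧ CompleteTo G (X 2) (X 3) ∧ CompleteTo G (X 4) (X 5)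

/-- The induced subgraph of `G` on `S` is a 6-crown with good triple `(C, D, istar)`. -/
def IsCrownTripleOn (G : SimpleGraph V) (S : Set V) (C D : ZMod 6 → Set V)
    (istar : ZMod 6) : Prop :=
  ((⋃ i, C i) ∪ (⋃ i, D i)) = S ∧
  (∀ i j : ZMod 6, i ≠ j → Disjoint (C i) (C j) ∧ Disjoint (D i) (D j)) ∧
  (∀ i j : ZMod 6, Disjoint (C i) (D j)) ∧
  (∀ i, G.IsClique (C i) ∧ G.IsClique (D i)) ∧
  (∀ i, (C i).Nonempty) ∧
  D (istar - 2) = ∅ ∧ D (istar - 1) = ∅ ∧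
  (D (istar + 1)).Nonempty ∧ (D (istar + 2)).Nonempty ∧ (D (istar + 3)).Nonempty ∧
  (∀ i, CompleteTo G (C i) (C (i - 1) ∪ C (i + 1)) ∧
        AnticompleteTo G (C i) (C (i + 2) ∪ C (i + 3) ∪ C (i + 4))) ∧
  (∀ i, CompleteTo G (D i) (C (i - 1) ∪ C i ∪ C (i + 1)) ∧
        AnticompleteTo G (D i) (C (i + 2) ∪ C (i + 3) ∪ C (i + 4))) ∧
  (∀ i j : ZMod 6, i ≠ j → AnticompleteTo G (D i) (D j))

/-- The induced subgraph of `G` on `S` is a 6-crown. -/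
def IsCrown6On (G : SimpleGraph V) (S : Set V) : Prop :=
  ∃ C D istar, IsCrownTripleOn G S C D istar

/-- The set `X`: vertices outside `S` mixed on `S`. -/
def setX (G : SimpleGraph V) (S : Set V) : Set V :=
  {v | v ∉ S ∧ (∃ w ∈ S, G.Adj v w) ∧ ∃ w ∈ S, ¬ G.Adj v w}

/-- The set `L_A`: vertices of `X` with a neighbor in `A`, anticomplete to `S \ A`. -/
def setL (G : SimpleGraph V) (S A : Set V) : Set V :=
  {v | v ∈ setX G S ∧ (∃ w ∈ A, G.Adj v w) ∧ ∀ w ∈ S \ A, ¬ G.Adj v w}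

/-- The set `T_{B_i}` (for `A := A`, `Bi := B_i`, `Ci := C_i`): vertices of `X` complete to
`A ∪ B_i`, mixed on `C_i`, anticomplete to `S \ (A ∪ B_i ∪ C_i)`. -/
def setT (G : SimpleGraph V) (S A Bi Ci : Set V) : Set V :=
  {v | v ∈ setX G S ∧ (∀ w ∈ A ∪ Bi, G.Adj v w) ∧
       (∃ w ∈ Ci, G.Adj v w) ∧ (∃ w ∈ Ci, ¬ G.Adj v w) ∧
       ∀ w ∈ S \ (A ∪ Bi ∪ Ci), ¬ G.Adj v w}

/-- The set `R_{B_i}`: vertices of `X` complete to `A`, with a neighbor in `B_i`,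
anticomplete to `S \ (A ∪ B_i)`. -/
def setR (G : SimpleGraph V) (S A Bi : Set V) : Set V :=
  {v | v ∈ setX G S ∧ (∀ w ∈ A, G.Adj v w) ∧ (∃ w ∈ Bi, G.Adj v w) ∧
       ∀ w ∈ S \ (A ∪ Bi), ¬ G.Adj v w}

end Paper

/-!
Membership in `A i` pins down the neighbourhood of a vertex on the hole, so every adjacency
or non-adjacency demanded by the bracelet axioms is forced: its failure would close an induced
`C₄`, `C₅` or `P₇` through hole vertices. Every such local statement is proved after rotating
the hole so that the class in question is `A 0`. The only interaction between distant classes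
is that an edge between `A t` and `A (t + 2)` excludes one between `A (t + 3)` and `A (t + 5)`
(an induced `C₅`); hence such edges are missing at four consecutive positions `s + 1, …, s + 4`,
and this is exactly what makes `s` a good index `i*`.
-/

theorem ZMod.exists_four_consecutive_not {p : ZMod 7 → Prop} (hp : ∀ t, ¬ (p t ∧ p (t + 3))) :
    ∃ s, ¬ p (s + 1) ∧ ¬ p (s + 2) ∧ ¬ p (s + 3) ∧ ¬ p (s + 4) := by
  classical
  have key : ∀ b : ZMod 7 → Bool, (∀ t, ¬ (b t ∧ b (t + 3))) →
      ∃ s, b (s + 1) = false ∧ b (s + 2) = false ∧ b (s + 3) = false ∧ b (s + 4) = false := by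
    set_option maxRecDepth 10000 in decide
  simpa using key (fun t => decide (p t)) (by simpa using hp)

namespace Paper

variable {V : Type*} {G : SimpleGraph V}

theorem containsInducedOn_univ_of_adj_of_compl_adj {W : Type*} {H : SimpleGraph W} (f : W → V)
    (hadj : ∀ a b, H.Adj a b → G.Adj (f a) (f b)) (hnon : ∀ a b, Hᶜ.Adj a b → Gᶜ.Adj (f a) (f b)) :
    ContainsInducedOn G Set.univ H := by
  have hne : ∀ a b, a ≠ b → f a ≠ f b := fun a b hab => by
    by_cases h : H.Adj a b
    · exact (hadj a b h).ne
    · exact (hnon a b ((compl_adj H a b).2 ⟨hab, h⟩)).ne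
  refine ⟨⟨f, fun a b h => by_contra fun hab => hne a b hab h⟩, fun _ => trivial, fun a b => ?_⟩
  obtain rfl | hab := eq_or_ne a b
  · simp
  exact ⟨fun h => by_contra fun h' => ((compl_adj G _ _).1 (hnon a b ⟨hab, h'⟩)).2 h, hadj a b⟩

theorem containsInducedOn_univ_pathG {n : ℕ} (f : Fin n → V)
    (hadj : ∀ a b : Fin n, (a : ℕ) + 1 = b → G.Adj (f a) (f b))
    (hnon : ∀ a b : Fin n, (a : ℕ) + 1 < b → Gᶜ.Adj (f a) (f b)) :
    ContainsInducedOn G Set.univ (pathG n) := by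
  refine containsInducedOn_univ_of_adj_of_compl_adj f (fun a b h => ?_) (fun a b h => ?_)
  · rcases (fromRel_adj _ a b).1 h with ⟨-, h | h⟩
    · exact hadj a b h
    · exact (hadj b a h).symm
  · rw [compl_adj, pathG, fromRel_adj] at h
    rcases lt_or_gt_of_ne (Fin.val_ne_of_ne h.1) with hab | hab
    · exact hnon a b (by omega)
    · exact (hnon b a (by omega)).symm

theorem containsInducedOn_univ_cycG {n : ℕ} (f : ZMod n → V)
    (hadj : ∀ a, G.Adj (f a) (f (a + 1)))
    (hnon : ∀ a b, b ≠ a → b ≠ a + 1 → a ≠ b + 1 → Gᶜ.Adj (f a) (f b)) :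
    ContainsInducedOn G Set.univ (cycG n) := by
  refine containsInducedOn_univ_of_adj_of_compl_adj f (fun a b h => ?_) (fun a b h => ?_)
  · rcases (fromRel_adj _ a b).1 h with ⟨-, rfl | rfl⟩
    · exact hadj a
    · exact (hadj b).symm
  · rw [compl_adj, cycG, fromRel_adj] at h
    simp only [not_and, not_or] at h
    exact hnon a b (Ne.symm h.1) (Ne.symm (h.2 h.1).1) (Ne.symm (h.2 h.1).2)

theorem containsInducedOn_univ_cycG4 {a b c d : V} (hab : G.Adj a b) (hbc : G.Adj b c)
    (hcd : G.Adj c d) (hda : G.Adj d a) (hac : Gᶜ.Adj a c) (hbd : Gᶜ.Adj b d) :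
    ContainsInducedOn G Set.univ (cycG 4) := by
  refine containsInducedOn_univ_cycG (![a, b, c, d] : Fin 4 → V) (fun p => ?_) (fun p q => ?_)
  · fin_cases p <;> assumption
  · fin_cases p <;> fin_cases q <;> intro h₁ h₂ h₃ <;>
      first | exact (h₁ rfl).elim | exact (h₂ rfl).elim | exact (h₃ rfl).elim | assumption |
        exact Adj.symm ‹_›

theorem containsInducedOn_univ_cycG5 {a b c d e : V} (hab : G.Adj a b) (hbc : G.Adj b c)
    (hcd : G.Adj c d) (hde : G.Adj d e) (hea : G.Adj e a) (hac : Gᶜ.Adj a c) (had : Gᶜ.Adj a d)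
    (hbd : Gᶜ.Adj b d) (hbe : Gᶜ.Adj b e) (hce : Gᶜ.Adj c e) :
    ContainsInducedOn G Set.univ (cycG 5) := by
  refine containsInducedOn_univ_cycG (![a, b, c, d, e] : Fin 5 → V) (fun p => ?_) (fun p q => ?_)
  · fin_cases p <;> assumption
  · fin_cases p <;> fin_cases q <;> intro h₁ h₂ h₃ <;>
      first | exact (h₁ rfl).elim | exact (h₂ rfl).elim | exact (h₃ rfl).elim | assumption |
        exact Adj.symm ‹_›

theorem nbrIn_subset_or_nbrIn_subset (h4 : Free G (cycG 4)) {Y : Set V} (hY : G.IsClique Y)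
    {u v : V} (huv : G.Adj u v) (hu : u ∉ Y) (hv : v ∉ Y) :
    nbrIn G Y u ⊆ nbrIn G Y v ∨ nbrIn G Y v ⊆ nbrIn G Y u := by
  by_contra! h
  obtain ⟨⟨p, ⟨hp, hup⟩, hvp⟩, ⟨q, ⟨hq, hvq⟩, huq⟩⟩ :=
    And.intro (Set.not_subset.1 h.1) (Set.not_subset.1 h.2)
  have hpq : p ≠ q := by rintro rfl; exact huq ⟨hp, hup⟩
  exact h4 (containsInducedOn_univ_cycG4 hup (hY hp hq hpq) hvq.symm huv.symm
    ((compl_adj G u q).2 ⟨fun h => hu (h ▸ hq), fun h => huq ⟨hq, h⟩⟩)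
    ((compl_adj G p v).2 ⟨fun h => hv (h ▸ hp), fun h => hvp ⟨hp, h.symm⟩⟩))

def HasSkipEdge (G : SimpleGraph V) (A : ZMod 7 → Set V) (i : ZMod 7) : Prop :=
  ∃ u ∈ A i, ∃ w ∈ A (i + 2), G.Adj u w

theorem braceletPlus_eq_empty {A : ZMod 7 → Set V} {t : ZMod 7} (h : ¬ HasSkipEdge G A t) :
    braceletPlus G A t = ∅ :=
  Set.eq_empty_of_forall_notMem fun v ⟨hv, _, hvw⟩ => h ⟨v, hv, hvw⟩

theorem braceletMinus_eq_empty {A : ZMod 7 → Set V} {t : ZMod 7}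
    (h : ¬ HasSkipEdge G A (t - 2)) : braceletMinus G A t = ∅ :=
  Set.eq_empty_of_forall_notMem fun v ⟨hv, _, w, hw, hvw⟩ =>
    h ⟨w, hw, v, (sub_add_cancel t 2).symm ▸ hv, hvw.symm⟩

theorem eq_braceletStar_union_braceletPlus_union_braceletMinus {A : ZMod 7 → Set V} {i : ZMod 7}
    (h : ∀ v ∈ A i, ∀ p ∈ A (i + 2), ∀ m ∈ A (i - 2), G.Adj v p → ¬ G.Adj v m) :
    A i = braceletStar G A i ∪ braceletPlus G A i ∪ braceletMinus G A i := by
  refine subset_antisymm (fun v hv => ?_) (Set.union_subset (Set.union_subset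
    (fun v hv => hv.1) (fun v hv => hv.1)) (fun v hv => hv.1))
  by_cases hplus : ∃ p ∈ A (i + 2), G.Adj v p
  · obtain ⟨p, hp, hvp⟩ := hplus
    exact Or.inl (Or.inr ⟨hv, fun m hm => h v hv p hp m hm hvp, p, hp, hvp⟩)
  by_cases hminus : ∃ m ∈ A (i - 2), G.Adj v m
  · exact Or.inr ⟨hv, fun p hp hvp => hplus ⟨p, hp, hvp⟩, hminus⟩
  · exact Or.inl (Or.inl ⟨hv, fun w hw hvw =>
      hw.elim (fun hw => hminus ⟨w, hw, hvw⟩) (fun hw => hplus ⟨w, hw, hvw⟩)⟩)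

/-- The set `A_i` of the paper. -/
def holeClass (G : SimpleGraph V) (x : ZMod 7 → V) (i : ZMod 7) : Set V :=
  {v | {w | w = v ∨ G.Adj v w} ∩ Set.range x = {x (i - 1), x i, x (i + 1)}}

theorem holeClass_rotate (x : ZMod 7 → V) (c i : ZMod 7) :
    holeClass G (fun j => x (j + c)) i = holeClass G x (i + c) := by
  have hrange : Set.range (fun j => x (j + c)) = Set.range x :=
    (Equiv.addRight c).surjective.range_comp x
  simp only [holeClass, hrange, sub_add_eq_add_sub, add_right_comm i 1 c]

namespace IsHole7

variable {x : ZMod 7 → V} (hx : IsHole7 G x)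
include hx

theorem rotate (c : ZMod 7) : IsHole7 G (fun j => x (j + c)) :=
  ⟨hx.1.comp (add_left_injective c), fun i j => by rw [hx.2]; simp only [add_sub_add_right_eq_sub]⟩

theorem exists_rotate (i : ZMod 7) :
    ∃ y, IsHole7 G y ∧ ∀ c, holeClass G x (i + c) = holeClass G y c :=
  ⟨_, hx.rotate i, fun c => by rw [holeClass_rotate, add_comm]⟩

theorem mem_holeClass_self (i : ZMod 7) : x i ∈ holeClass G x i := by
  ext w
  simp only [Set.mem_inter_iff, Set.mem_ofPred_eq, Set.mem_range, Set.mem_insert_iff,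
    Set.mem_singleton_iff]
  constructor
  · rintro ⟨h, j, rfl⟩
    simp only [hx.1.eq_iff, hx.2] at h ⊢
    grind
  · rintro (rfl | rfl | rfl)
    all_goals refine ⟨?_, _, rfl⟩
    · exact Or.inr ((hx.2 _ _).2 (by simp))
    · exact Or.inl rfl
    · exact Or.inr ((hx.2 _ _).2 (by simp))

theorem eq_or_adj_iff {v : V} {i : ZMod 7} (hv : v ∈ holeClass G x i) (j : ZMod 7) :
    (x j = v ∨ G.Adj v (x j)) ↔ (j = i - 1 ∨ j = i ∨ j = i + 1) := by
  have h := congrArg (x j ∈ ·) hv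
  simpa [hx.1.eq_iff] using h

theorem disjoint_holeClass {i j : ZMod 7} (hij : i ≠ j) :
    Disjoint (holeClass G x i) (holeClass G x j) := by
  refine Set.disjoint_left.2 fun v hvi hvj => hij ?_
  have h k := (hx.eq_or_adj_iff hvi k).symm.trans (hx.eq_or_adj_iff hvj k)
  clear hij hvi hvj
  revert i j
  decide

theorem notMem_holeClass {v : V} {i j : ZMod 7} (hv : v ∈ holeClass G x i) (hij : i ≠ j) :
    v ∉ holeClass G x j :=
  Set.disjoint_left.1 (hx.disjoint_holeClass hij) hv

theorem ne_of_mem_holeClass {u w : V} {i j : ZMod 7} (hu : u ∈ holeClass G x i)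
    (hw : w ∈ holeClass G x j) (hij : i ≠ j) : u ≠ w :=
  fun h => hx.notMem_holeClass hu hij (h ▸ hw)

theorem adj_of_mem_holeClass {v : V} {i j : ZMod 7} (hv : v ∈ holeClass G x i)
    (hj : j = i - 1 ∨ j = i + 1) : G.Adj v (x j) := by
  refine ((hx.eq_or_adj_iff hv j).2 (by tauto)).resolve_left fun hjv => ?_
  have hji : j ≠ i := by
    rcases hj with rfl | rfl <;> simp only [ne_eq, sub_eq_self, add_eq_left] <;> decide
  exact hx.notMem_holeClass (hx.mem_holeClass_self j) hji (hjv ▸ hv)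

theorem compl_adj_of_mem_holeClass {v : V} {i j : ZMod 7} (hv : v ∈ holeClass G x i)
    (hj : ¬ (j = i - 1 ∨ j = i ∨ j = i + 1)) : Gᶜ.Adj v (x j) := by
  rw [← hx.eq_or_adj_iff hv, not_or] at hj
  exact (compl_adj G v (x j)).2 ⟨Ne.symm hj.1, hj.2⟩

theorem isClique_holeClass (h4 : Free G (cycG 4)) (i : ZMod 7) :
    G.IsClique (holeClass G x i) := by
  obtain ⟨y, hy, hxy⟩ := hx.exists_rotate i
  rw [← add_zero i, hxy]
  intro u hu v hv huv
  by_contra huv'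
  exact h4 (containsInducedOn_univ_cycG4 (b := y 1) (d := y 6)
    (hy.adj_of_mem_holeClass hu (by decide)) (hy.adj_of_mem_holeClass hv (by decide)).symm
    (hy.adj_of_mem_holeClass hv (by decide)) (hy.adj_of_mem_holeClass hu (by decide)).symm
    ⟨huv, huv'⟩ (hy.compl_adj_of_mem_holeClass (hy.mem_holeClass_self 1) (by decide)))

theorem adj_of_mem_holeClass_of_mem_holeClass (h7 : Free G (pathG 7)) {u w : V}
    {i j : ZMod 7} (hu : u ∈ holeClass G x i) (hw : w ∈ holeClass G x j) (hij : j = i + 1) :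
    G.Adj u w := by
  subst hij
  obtain ⟨y, hy, hxy⟩ := hx.exists_rotate i
  rw [← add_zero i, hxy] at hu
  rw [hxy] at hw
  have huw := hy.ne_of_mem_holeClass hu hw (by decide)
  by_contra huw'
  -- every pair of this path other than `u, w` is settled by the classes of its two vertices
  refine h7 (containsInducedOn_univ_pathG ![u, y 6, y 5, y 4, y 3, y 2, w]
    (fun a b hab => ?_) (fun a b hab => ?_))
  all_goals fin_cases a <;> fin_cases b <;> try (simp only at hab; omega)
  all_goals first
    | exact ⟨huw, huw'⟩
    | exact hy.adj_of_mem_holeClass (hy.mem_holeClass_self _) (by decide)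
    | exact hy.adj_of_mem_holeClass hu (by decide)
    | exact (hy.adj_of_mem_holeClass hw (by decide)).symm
    | exact hy.compl_adj_of_mem_holeClass (hy.mem_holeClass_self _) (by decide)
    | exact hy.compl_adj_of_mem_holeClass hu (by decide)
    | exact (hy.compl_adj_of_mem_holeClass hw (by decide)).symm

theorem compl_adj_of_mem_holeClass_of_mem_holeClass (h4 : Free G (cycG 4)) {u w : V}
    {i j : ZMod 7} (hu : u ∈ holeClass G x i) (hw : w ∈ holeClass G x j) (hij : j = i + 3) :
    Gᶜ.Adj u w := by
  subst hij
  obtain ⟨y, hy, hxy⟩ := hx.exists_rotate i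
  rw [← add_zero i, hxy] at hu
  rw [hxy] at hw
  refine (compl_adj G u w).2 ⟨hy.ne_of_mem_holeClass hu hw (by decide), fun huw => h4 ?_⟩
  exact containsInducedOn_univ_cycG4 (b := y 1) (c := y 2)
    (hy.adj_of_mem_holeClass hu (by decide))
    (hy.adj_of_mem_holeClass (hy.mem_holeClass_self 1) (by decide))
    (hy.adj_of_mem_holeClass hw (by decide)).symm huw.symm
    (hy.compl_adj_of_mem_holeClass hu (by decide))
    (hy.compl_adj_of_mem_holeClass hw (by decide)).symm

theorem completeTo_holeClass (h7 : Free G (pathG 7)) (i : ZMod 7) :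
    CompleteTo G (holeClass G x i) (holeClass G x (i - 1) ∪ holeClass G x (i + 1)) := by
  rintro u hu w (hw | hw)
  · exact (hx.adj_of_mem_holeClass_of_mem_holeClass h7 hw hu (sub_add_cancel i 1).symm).symm
  · exact hx.adj_of_mem_holeClass_of_mem_holeClass h7 hu hw rfl

theorem anticompleteTo_holeClass (h4 : Free G (cycG 4)) (i : ZMod 7) :
    AnticompleteTo G (holeClass G x i) (holeClass G x (i - 3) ∪ holeClass G x (i + 3)) := by
  rintro u hu w (hw | hw)
  · exact fun huw => (hx.compl_adj_of_mem_holeClass_of_mem_holeClass h4 hw hu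
      (sub_add_cancel i 3).symm).2 huw.symm
  · exact (hx.compl_adj_of_mem_holeClass_of_mem_holeClass h4 hu hw rfl).2

theorem exists_mem_holeClass_not_adj (i : ZMod 7) :
    ∃ v ∈ holeClass G x i, (∃ w ∈ holeClass G x (i - 2), ¬ G.Adj v w) ∧
      ∃ w ∈ holeClass G x (i + 2), ¬ G.Adj v w :=
  ⟨x i, hx.mem_holeClass_self i,
    ⟨x (i - 2), hx.mem_holeClass_self _, by rw [hx.2, sub_sub_cancel, sub_sub_cancel_left]; decide⟩,
    ⟨x (i + 2), hx.mem_holeClass_self _,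
      by rw [hx.2, sub_add_cancel_left, add_sub_cancel_left]; decide⟩⟩

theorem not_adj_of_mem_holeClass_sub_two_of_adj (h4 : Free G (cycG 4)) (h5 : Free G (cycG 5))
    {v p m : V} {i : ZMod 7} (hv : v ∈ holeClass G x i) (hp : p ∈ holeClass G x (i + 2))
    (hm : m ∈ holeClass G x (i - 2)) (hvp : G.Adj v p) : ¬ G.Adj v m := by
  obtain ⟨y, hy, hxy⟩ := hx.exists_rotate i
  rw [← add_zero i, hxy] at hv
  rw [hxy] at hp
  rw [sub_eq_add_neg, hxy] at hm
  intro hvm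
  exact h5 (containsInducedOn_univ_cycG5 (c := y 3) (d := y 4) hvp
    (hy.adj_of_mem_holeClass hp (by decide))
    (hy.adj_of_mem_holeClass (hy.mem_holeClass_self 3) (by decide))
    (hy.adj_of_mem_holeClass hm (by decide)).symm hvm.symm
    (hy.compl_adj_of_mem_holeClass hv (by decide))
    (hy.compl_adj_of_mem_holeClass hv (by decide))
    (hy.compl_adj_of_mem_holeClass hp (by decide))
    (hy.compl_adj_of_mem_holeClass_of_mem_holeClass h4 hp hm (by decide))
    (hy.compl_adj_of_mem_holeClass hm (by decide)).symm)

theorem not_hasSkipEdge_and_hasSkipEdge_add_three (h4 : Free G (cycG 4))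
    (h5 : Free G (cycG 5)) (h7 : Free G (pathG 7)) (i : ZMod 7) :
    ¬ (HasSkipEdge G (holeClass G x) i ∧ HasSkipEdge G (holeClass G x) (i + 3)) := by
  rintro ⟨⟨u, hu, p, hp, hup⟩, ⟨v, hv, q, hq, hvq⟩⟩
  obtain ⟨y, hy, hxy⟩ := hx.exists_rotate i
  rw [← add_zero i, hxy] at hu
  rw [add_assoc] at hq
  rw [hxy] at hp hv hq
  have huq : ¬ G.Adj u q := hy.not_adj_of_mem_holeClass_sub_two_of_adj h4 h5 hu hp hq hup
  exact h5 (containsInducedOn_univ_cycG5 (a := y 6)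
    (hy.adj_of_mem_holeClass hu (by decide)).symm hup
    (hy.adj_of_mem_holeClass_of_mem_holeClass h7 hp hv (by decide)) hvq
    (hy.adj_of_mem_holeClass hq (by decide))
    (hy.compl_adj_of_mem_holeClass hp (by decide)).symm
    (hy.compl_adj_of_mem_holeClass hv (by decide)).symm
    (hy.compl_adj_of_mem_holeClass_of_mem_holeClass h4 hu hv (by decide))
    ((compl_adj G u q).2 ⟨hy.ne_of_mem_holeClass hu hq (by decide), huq⟩)
    (hy.compl_adj_of_mem_holeClass_of_mem_holeClass h4 hp hq (by decide)))

theorem cnbr_subset_cnbr (h4 : Free G (cycG 4)) (h7 : Free G (pathG 7)) {u v : V} {i : ZMod 7}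
    (hu : u ∈ holeClass G x i) (hv : v ∈ holeClass G x i)
    (hplus : nbrIn G (holeClass G x (i + 2)) u ⊆ nbrIn G (holeClass G x (i + 2)) v)
    (hminus : nbrIn G (holeClass G x (i - 2)) u ⊆ nbrIn G (holeClass G x (i - 2)) v) :
    cnbr G (⋃ k, holeClass G x k) u ⊆ cnbr G (⋃ k, holeClass G x k) v := by
  obtain ⟨y, hy, hxy⟩ := hx.exists_rotate i
  have hS : ⋃ k, holeClass G x k = ⋃ k, holeClass G y k := by
    simp_rw [← hxy]
    exact ((Equiv.addLeft i).iSup_comp).symm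
  rw [← add_zero i, hxy] at hu hv
  rw [hxy] at hplus
  rw [sub_eq_add_neg, hxy] at hminus
  rw [hS]
  rintro w ⟨hwS, hw⟩
  refine ⟨hwS, ?_⟩
  have hwu {j : ZMod 7} (hwj : w ∈ holeClass G y j) (hj : 0 ≠ j) : G.Adj u w :=
    hw.resolve_left (hy.ne_of_mem_holeClass hu hwj hj).symm
  have hfar {j : ZMod 7} (hwj : w ∈ holeClass G y j) (hj : j = 0 + 3 ∨ 0 = j + 3) : False := by
    have hc : Gᶜ.Adj u w := hj.elim (hy.compl_adj_of_mem_holeClass_of_mem_holeClass h4 hu hwj)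
      fun hj => (hy.compl_adj_of_mem_holeClass_of_mem_holeClass h4 hwj hu hj).symm
    exact hw.elim (fun h => hc.ne h.symm) ((compl_adj G u w).1 hc).2
  obtain ⟨j, hwj⟩ := Set.mem_iUnion.1 hwS
  obtain rfl | rfl | rfl | rfl | rfl | rfl | rfl :=
    (by decide : ∀ j : ZMod 7, j = 0 ∨ j = 1 ∨ j = 2 ∨ j = 3 ∨ j = 4 ∨ j = 5 ∨ j = 6) j
  · exact (eq_or_ne w v).imp id fun hwv => hy.isClique_holeClass h4 0 hv hwj (Ne.symm hwv)
  · exact Or.inr (hy.adj_of_mem_holeClass_of_mem_holeClass h7 hv hwj (by decide))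
  · exact Or.inr (hplus ⟨hwj, hwu hwj (by decide)⟩).2
  · exact (hfar hwj (by decide)).elim
  · exact (hfar hwj (by decide)).elim
  · exact Or.inr (hminus ⟨hwj, hwu hwj (by decide)⟩).2
  · exact Or.inr (hy.adj_of_mem_holeClass_of_mem_holeClass h7 hwj hv (by decide)).symm

theorem cnbr_total_of_mem_braceletPlus (h4 : Free G (cycG 4)) (h7 : Free G (pathG 7))
    {i : ZMod 7} {u v : V} (hu : u ∈ braceletPlus G (holeClass G x) i)
    (hv : v ∈ braceletPlus G (holeClass G x) i) :
    cnbr G (⋃ k, holeClass G x k) u ⊆ cnbr G (⋃ k, holeClass G x k) v ∨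
      cnbr G (⋃ k, holeClass G x k) v ⊆ cnbr G (⋃ k, holeClass G x k) u := by
  obtain rfl | huv := eq_or_ne u v
  · exact Or.inl subset_rfl
  have hnone {w : V} (hw : w ∈ braceletPlus G (holeClass G x) i) :
      nbrIn G (holeClass G x (i - 2)) w ⊆ ∅ := fun p hp => hw.2.1 p hp.1 hp.2
  have hi : i ≠ i + 2 := fun h => absurd (left_eq_add.1 h) (by decide)
  refine (nbrIn_subset_or_nbrIn_subset h4 (hx.isClique_holeClass h4 (i + 2))
    (hx.isClique_holeClass h4 i hu.1 hv.1 huv) (hx.notMem_holeClass hu.1 hi)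
    (hx.notMem_holeClass hv.1 hi)).imp (fun h => ?_) (fun h => ?_)
  · exact hx.cnbr_subset_cnbr h4 h7 hu.1 hv.1 h ((hnone hu).trans (Set.empty_subset _))
  · exact hx.cnbr_subset_cnbr h4 h7 hv.1 hu.1 h ((hnone hv).trans (Set.empty_subset _))

theorem cnbr_total_of_mem_braceletMinus (h4 : Free G (cycG 4)) (h7 : Free G (pathG 7))
    {i : ZMod 7} {u v : V} (hu : u ∈ braceletMinus G (holeClass G x) i)
    (hv : v ∈ braceletMinus G (holeClass G x) i) :
    cnbr G (⋃ k, holeClass G x k) u ⊆ cnbr G (⋃ k, holeClass G x k) v ∨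
      cnbr G (⋃ k, holeClass G x k) v ⊆ cnbr G (⋃ k, holeClass G x k) u := by
  obtain rfl | huv := eq_or_ne u v
  · exact Or.inl subset_rfl
  have hnone {w : V} (hw : w ∈ braceletMinus G (holeClass G x) i) :
      nbrIn G (holeClass G x (i + 2)) w ⊆ ∅ := fun p hp => hw.2.1 p hp.1 hp.2
  have hi : i ≠ i - 2 := fun h => absurd (sub_eq_self.1 h.symm) (by decide)
  refine (nbrIn_subset_or_nbrIn_subset h4 (hx.isClique_holeClass h4 (i - 2))
    (hx.isClique_holeClass h4 i hu.1 hv.1 huv) (hx.notMem_holeClass hu.1 hi)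
    (hx.notMem_holeClass hv.1 hi)).imp (fun h => ?_) (fun h => ?_)
  · exact hx.cnbr_subset_cnbr h4 h7 hu.1 hv.1 ((hnone hu).trans (Set.empty_subset _)) h
  · exact hx.cnbr_subset_cnbr h4 h7 hv.1 hu.1 ((hnone hv).trans (Set.empty_subset _)) h

end IsHole7

end Paper

open Paper

theorem statement_12_general {V : Type*} (G : SimpleGraph V)
    (h7 : Paper.Free G (pathG 7)) (h4 : Paper.Free G (cycG 4)) (h5 : Paper.Free G (cycG 5))
    (x : ZMod 7 → V) (hx : IsHole7 G x) (A : ZMod 7 → Set V)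
    (hA : ∀ i : ZMod 7, A i =
      {v : V | {w : V | w = v ∨ G.Adj v w} ∩ Set.range x = {x (i - 1), x i, x (i + 1)}}) :
    IsGoodPartitionOn G (⋃ i, A i) A := by
  obtain rfl : A = holeClass G x := funext hA
  obtain ⟨s, hs1, hs2, hs3, hs4⟩ :=
    ZMod.exists_four_consecutive_not (hx.not_hasSkipEdge_and_hasSkipEdge_add_three h4 h5 h7)
  have hmod : ∀ t : ZMod 7, t - 3 = t + 4 ∧ t - 3 - 2 = t + 2 ∧ t + 3 - 2 = t + 1 ∧
      t - 2 - 2 = t + 3 ∧ t - 1 - 2 = t + 4 := by decide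
  obtain ⟨e1, e2, e3, e4, e5⟩ := hmod s
  refine ⟨s, rfl, fun i j => hx.disjoint_holeClass,
    fun i => ⟨⟨x i, hx.mem_holeClass_self i⟩, hx.isClique_holeClass h4 i,
      hx.completeTo_holeClass h7 i, hx.anticompleteTo_holeClass h4 i⟩,
    fun i => eq_braceletStar_union_braceletPlus_union_braceletMinus fun v hv p hp m hm =>
      hx.not_adj_of_mem_holeClass_sub_two_of_adj h4 h5 hv hp hm,
    fun i u hu v hv => hx.cnbr_total_of_mem_braceletPlus h4 h7 hu hv,
    fun i u hu v hv => hx.cnbr_total_of_mem_braceletMinus h4 h7 hu hv,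
    hx.exists_mem_holeClass_not_adj,
    braceletPlus_eq_empty (e1 ▸ hs4), braceletMinus_eq_empty (e2 ▸ hs2),
    braceletPlus_eq_empty hs3, braceletMinus_eq_empty (e3 ▸ hs1),
    braceletMinus_eq_empty (e4 ▸ hs3), braceletPlus_eq_empty hs2,
    braceletMinus_eq_empty (e5 ▸ hs4), braceletPlus_eq_empty hs1⟩

theorem statement_12 {V : Type*} [Fintype V] (G : SimpleGraph V)
    (h7 : Paper.Free G (pathG 7)) (h4 : Paper.Free G (cycG 4)) (h5 : Paper.Free G (cycG 5))
    (x : ZMod 7 → V) (hx : IsHole7 G x) (A : ZMod 7 → Set V)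
    (hA : ∀ i : ZMod 7, A i =
      {v : V | {w : V | w = v ∨ G.Adj v w} ∩ Set.range x = {x (i - 1), x i, x (i + 1)}}) :
    IsGoodPartitionOn G (⋃ i, A i) A :=
  statement_12_general G h7 h4 h5 x hx A hA
end

section
/- Let R be a lantern. Then R is P_7-free, every hole in R has length exactly six, and R does not admit a clique-cutset. -/
open SimpleGraph

open Paper

/-!
Fix `a ∈ A` and `d ∈ D`. Every vertex of a lantern lies in `N[a]` or in `N[d]`, and `a`, `d` are
at distance at least three. So an induced path or hole through both `A` and `D` has at most six
vertices, and a hole through both has exactly six. If it meets `A` but not `D`, its vertices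
outside `N[a]` lie in `C₁ ∪ ⋯ ∪ C_r`, which induces a disjoint union of cliques: at most two
consecutive vertices fit there, and the two vertices flanking `a` are then forced into a single
clique `Bᵢ` although they are non-adjacent. If it meets neither, it lies in one `Bᵢ ∪ Cᵢ`, a union
of two cliques, whose only possible hole is a `C₄` alternating between `Bᵢ` and `Cᵢ`; the chain
condition on `B₁, C₁` and the completeness of `Bᵢ` to `Cᵢ` for `i ≠ 1` rule it out.

A clique misses `A` or `D`, say `D`, and meets at most one group `Bᵢ ∪ Cᵢ`. Every vertex outside
the clique then reaches `D`, through another group when it lies in `A`.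
-/

namespace Paper

variable {V ι : Type*} {G : SimpleGraph V} {A D : Set V} {Bs Cs : ι → Set V} {i₀ : ι}

theorem pathG_adj {n : ℕ} {s t : Fin n} :
    (pathG n).Adj s t ↔ s.val + 1 = t.val ∨ t.val + 1 = s.val := by
  simp only [pathG, fromRel_adj, ne_eq, Fin.ext_iff]
  omega

theorem _root_.ZMod.natCast_eq_natCast_iff_of_lt {k a b : ℕ} (ha : a < k) (hb : b < k) :
    (a : ZMod k) = b ↔ a = b := by
  rw [ZMod.natCast_eq_natCast_iff', Nat.mod_eq_of_lt ha, Nat.mod_eq_of_lt hb]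

theorem _root_.ZMod.natCast_add_one_eq_natCast_iff {k a b : ℕ} (ha : a < k) (hb : b < k) :
    (a : ZMod k) + 1 = b ↔ a + 1 = b ∨ (a + 1 = k ∧ b = 0) := by
  rw [← Nat.cast_add_one]
  rcases (show a + 1 < k ∨ a + 1 = k by omega) with hak | hak
  · rw [ZMod.natCast_eq_natCast_iff_of_lt hak hb]
    omega
  · rw [hak, ZMod.natCast_self, ← Nat.cast_zero, ZMod.natCast_eq_natCast_iff_of_lt (by omega) hb]
    omega

theorem cycG_adj_add_natCast {k : ℕ} (hk : 2 ≤ k) (p : ZMod k) {a b : ℕ} (ha : a < k)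
    (hb : b < k) : (cycG k).Adj (p + a) (p + b) ↔
      a + 1 = b ∨ b + 1 = a ∨ (a + 1 = k ∧ b = 0) ∨ (b + 1 = k ∧ a = 0) := by
  simp only [cycG, fromRel_adj, ne_eq, add_assoc, add_right_inj,
    ZMod.natCast_eq_natCast_iff_of_lt ha hb, ZMod.natCast_add_one_eq_natCast_iff ha hb,
    ZMod.natCast_add_one_eq_natCast_iff hb ha]
  omega

/-- The hole `g 0, g 1, …, g (k - 1)`, indexed by `ℕ` rather than `ZMod k` so that position
arithmetic is linear arithmetic. -/
structure IsHoleSeq (G : SimpleGraph V) (k : ℕ) (g : ℕ → V) : Prop where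
  eq_iff : ∀ {a b}, a < k → b < k → (g a = g b ↔ a = b)
  adj_iff : ∀ {a b}, a < k → b < k →
    (G.Adj (g a) (g b) ↔ a + 1 = b ∨ b + 1 = a ∨ (a + 1 = k ∧ b = 0) ∨ (b + 1 = k ∧ a = 0))

theorem isHoleSeq_of_induced {k : ℕ} (hk : 2 ≤ k) (f : ZMod k ↪ V)
    (hf : ∀ s t, G.Adj (f s) (f t) ↔ (cycG k).Adj s t) (p : ZMod k) :
    IsHoleSeq G k (fun n => f (p + n)) where
  eq_iff ha hb :=
    f.injective.eq_iff.trans ((add_right_inj p).trans (ZMod.natCast_eq_natCast_iff_of_lt ha hb))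
  adj_iff ha hb := (hf _ _).trans (cycG_adj_add_natCast hk p ha hb)

namespace IsHoleSeq

variable {k : ℕ} {g : ℕ → V} {a b : ℕ}

theorem ne (hs : IsHoleSeq G k g) (hab : a ≠ b := by omega) (ha : a < k := by omega)
    (hb : b < k := by omega) : g a ≠ g b :=
  (hs.eq_iff ha hb).not.2 hab

theorem adj (hs : IsHoleSeq G k g)
    (hab : a + 1 = b ∨ b + 1 = a ∨ (a + 1 = k ∧ b = 0) ∨ (b + 1 = k ∧ a = 0) := by omega)
    (ha : a < k := by omega) (hb : b < k := by omega) : G.Adj (g a) (g b) :=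
  (hs.adj_iff ha hb).2 hab

theorem not_adj (hs : IsHoleSeq G k g)
    (hab : ¬ (a + 1 = b ∨ b + 1 = a ∨ (a + 1 = k ∧ b = 0) ∨ (b + 1 = k ∧ a = 0)) := by omega)
    (ha : a < k := by omega) (hb : b < k := by omega) : ¬ G.Adj (g a) (g b) :=
  (hs.adj_iff ha hb).not.2 hab

end IsHoleSeq

/-- `i₀` plays the role of the paper's index `1`. -/
structure IsLantern (G : SimpleGraph V) (A D : Set V) (Bs Cs : ι → Set V) (i₀ : ι) : Prop where
  cover : ∀ v, v ∈ A ∨ v ∈ D ∨ (∃ i, v ∈ Bs i) ∨ ∃ i, v ∈ Cs i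
  disjoint_A_D : Disjoint A D
  disjoint_A_C : ∀ i, Disjoint A (Cs i)
  disjoint_D_B : ∀ i, Disjoint D (Bs i)
  disjoint_groups : ∀ i j, i ≠ j → Disjoint (Bs i ∪ Cs i) (Bs j ∪ Cs j)
  A_nonempty : A.Nonempty
  D_nonempty : D.Nonempty
  B_nonempty : ∀ i, (Bs i).Nonempty
  C_nonempty : ∀ i, (Cs i).Nonempty
  isClique_A : G.IsClique A
  isClique_D : G.IsClique D
  isClique_B : ∀ i, G.IsClique (Bs i)
  isClique_C : ∀ i, G.IsClique (Cs i)
  anticomplete_A_D : AnticompleteTo G A D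
  complete_A_B : ∀ i, CompleteTo G A (Bs i)
  anticomplete_A_C : ∀ i, AnticompleteTo G A (Cs i)
  complete_D_C : ∀ i, CompleteTo G D (Cs i)
  anticomplete_D_B : ∀ i, AnticompleteTo G D (Bs i)
  chained_B_C : ChainedPairTo G (Bs i₀) (Cs i₀)
  chained_C_B : ChainedPairTo G (Cs i₀) (Bs i₀)
  complete_B_C : ∀ i, i ≠ i₀ → CompleteTo G (Bs i) (Cs i)
  anticomplete_groups : ∀ i j, i ≠ j → AnticompleteTo G (Bs i ∪ Cs i) (Bs j ∪ Cs j)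

theorem IsLanternPartitionOn.isLantern {r : ℕ} {Bs Cs : Fin r → Set V}
    (hp : IsLanternPartitionOn G Set.univ r A D Bs Cs) (hr : 0 < r) :
    IsLantern G A D Bs Cs ⟨0, hr⟩ := by
  obtain ⟨hcover, hAD, hdisj, hBC, hBBCC, hA, hD, hBCne, hAcl, hDcl, hcl, hADa, hAB, hDC, hchain,
    hcomp, hanti⟩ := hp
  refine ⟨fun v => ?_, hAD, fun i => (hdisj i).2.1, fun i => (hdisj i).2.2.1,
    fun i j hij => ?_, hA, hD, fun i => (hBCne i).1, fun i => (hBCne i).2, hAcl, hDcl,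
    fun i => (hcl i).1, fun i => (hcl i).2, hADa, fun i => (hAB i).1, fun i => (hAB i).2,
    fun i => (hDC i).1, fun i => (hDC i).2, (hchain _ rfl).1, (hchain _ rfl).2,
    fun i hi => hcomp i fun h0 => hi (Fin.ext h0), hanti⟩
  · have hv : v ∈ A ∪ D ∪ (⋃ i, Bs i) ∪ (⋃ i, Cs i) := hcover ▸ Set.mem_univ v
    simp only [Set.mem_union, Set.mem_iUnion] at hv
    tauto
  · simp only [Set.disjoint_union_left, Set.disjoint_union_right]
    exact ⟨⟨(hBBCC i j hij).1, (hBC j i).symm⟩, hBC i j, (hBBCC i j hij).2⟩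

namespace IsLantern

theorem symm (h : IsLantern G A D Bs Cs i₀) : IsLantern G D A Cs Bs i₀ where
  cover v := by rcases h.cover v with hv | hv | hv | hv <;> tauto
  disjoint_A_D := h.disjoint_A_D.symm
  disjoint_A_C := h.disjoint_D_B
  disjoint_D_B := h.disjoint_A_C
  disjoint_groups i j hij := by simpa only [Set.union_comm] using h.disjoint_groups i j hij
  A_nonempty := h.D_nonempty
  D_nonempty := h.A_nonempty
  B_nonempty := h.C_nonempty
  C_nonempty := h.B_nonempty
  isClique_A := h.isClique_D
  isClique_D := h.isClique_A
  isClique_B := h.isClique_C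
  isClique_C := h.isClique_B
  anticomplete_A_D x hx y hy hxy := h.anticomplete_A_D y hy x hx hxy.symm
  complete_A_B := h.complete_D_C
  anticomplete_A_C := h.anticomplete_D_B
  complete_D_C := h.complete_A_B
  anticomplete_D_B := h.anticomplete_A_C
  chained_B_C := h.chained_C_B
  chained_C_B := h.chained_B_C
  complete_B_C i hi x hx y hy := (h.complete_B_C i hi y hy x hx).symm
  anticomplete_groups i j hij x hx y hy :=
    h.anticomplete_groups i j hij x (Or.symm hx) y (Or.symm hy)

variable {a d x y z : V}

theorem mem_A_or_B_of_adj (h : IsLantern G A D Bs Cs i₀) (ha : a ∈ A) (hax : G.Adj a x) :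
    x ∈ A ∨ ∃ i, x ∈ Bs i := by
  rcases h.cover x with hx | hx | hx | ⟨i, hx⟩
  · exact .inl hx
  · exact (h.anticomplete_A_D a ha x hx hax).elim
  · exact .inr hx
  · exact (h.anticomplete_A_C i a ha x hx hax).elim

theorem mem_C_of_not_adj (h : IsLantern G A D Bs Cs i₀) (ha : a ∈ A) (hxa : x ≠ a)
    (hax : ¬ G.Adj a x) (hxD : x ∉ D) : ∃ i, x ∈ Cs i := by
  rcases h.cover x with hx | hx | ⟨i, hx⟩ | hx
  · exact (hax (h.isClique_A ha hx hxa.symm)).elim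
  · exact (hxD hx).elim
  · exact (hax (h.complete_A_B i a ha x hx)).elim
  · exact hx

theorem exists_mem_group (h : IsLantern G A D Bs Cs i₀) (hxA : x ∉ A) (hxD : x ∉ D) :
    ∃ i, x ∈ Bs i ∪ Cs i := by
  rcases h.cover x with hx | hx | ⟨i, hx⟩ | ⟨i, hx⟩
  · exact (hxA hx).elim
  · exact (hxD hx).elim
  · exact ⟨i, .inl hx⟩
  · exact ⟨i, .inr hx⟩

theorem eq_or_adj_of_mem_A_of_mem_D (h : IsLantern G A D Bs Cs i₀) (ha : a ∈ A) (hd : d ∈ D)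
    (x : V) : (x = a ∨ G.Adj a x) ∨ (x = d ∨ G.Adj d x) := by
  by_cases hxa : x = a
  · exact .inl (.inl hxa)
  by_cases hax : G.Adj a x
  · exact .inl (.inr hax)
  by_cases hxD : x ∈ D
  · exact .inr ((eq_or_ne x d).imp_right fun hxd => h.isClique_D hd hxD (Ne.symm hxd))
  obtain ⟨i, hx⟩ := h.mem_C_of_not_adj ha hxa hax hxD
  exact .inr (.inr (h.complete_D_C i d hd x hx))

theorem not_adj_of_adj_A (h : IsLantern G A D Bs Cs i₀) (ha : a ∈ A) (hd : d ∈ D)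
    (hax : G.Adj a x) : ¬ G.Adj x d := by
  rcases h.mem_A_or_B_of_adj ha hax with hx | ⟨i, hx⟩
  · exact h.anticomplete_A_D x hx d hd
  · exact fun hxd => h.anticomplete_D_B i d hd x hx hxd.symm

theorem eq_of_adj_of_mem_group (h : IsLantern G A D Bs Cs i₀) {i j : ι}
    (hx : x ∈ Bs i ∪ Cs i) (hy : y ∈ Bs j ∪ Cs j) (hxy : G.Adj x y) : i = j := by
  by_contra hij
  exact h.anticomplete_groups i j hij x hx y hy hxy

theorem mem_group_of_adj (h : IsLantern G A D Bs Cs i₀) {i : ι} (hx : x ∈ Bs i ∪ Cs i)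
    (hxy : G.Adj x y) (hyA : y ∉ A) (hyD : y ∉ D) : y ∈ Bs i ∪ Cs i := by
  obtain ⟨j, hy⟩ := h.exists_mem_group hyA hyD
  obtain rfl := h.eq_of_adj_of_mem_group hx hy hxy
  exact hy

theorem adj_of_adj_of_adj_of_mem_C (h : IsLantern G A D Bs Cs i₀) {i j l : ι}
    (hx : x ∈ Cs i) (hy : y ∈ Cs j) (hz : z ∈ Cs l) (hxy : G.Adj x y) (hyz : G.Adj y z)
    (hxz : x ≠ z) : G.Adj x z := by
  obtain rfl := h.eq_of_adj_of_mem_group (.inr hx) (.inr hy) hxy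
  obtain rfl := h.eq_of_adj_of_mem_group (.inr hy) (.inr hz) hyz
  exact h.isClique_C i hx hz hxz

theorem mem_B_of_adj_of_adj (h : IsLantern G A D Bs Cs i₀) {i : ι} (ha : a ∈ A)
    (hy : y ∈ Cs i) (hax : G.Adj a x) (hxy : G.Adj x y) : x ∈ Bs i := by
  rcases h.mem_A_or_B_of_adj ha hax with hx | ⟨j, hx⟩
  · exact (h.anticomplete_A_C i x hx y hy hxy).elim
  · obtain rfl := h.eq_of_adj_of_mem_group (.inl hx) (.inr hy) hxy
    exact hx

theorem eq_of_not_adj (h : IsLantern G A D Bs Cs i₀) {i : ι} (hx : x ∈ Bs i) (hy : y ∈ Cs i)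
    (hxy : ¬ G.Adj x y) : i = i₀ := by
  by_contra hi
  exact hxy (h.complete_B_C i hi x hx y hy)

theorem mem_B_i₀_of_induced_path (h : IsLantern G A D Bs Cs i₀) {i j : ι} (ha : a ∈ A)
    (hy : y ∈ Cs i) (hz : z ∈ Cs j) (hax : G.Adj a x) (hxy : G.Adj x y) (hyz : G.Adj y z)
    (hxz : ¬ G.Adj x z) : x ∈ Bs i₀ := by
  obtain rfl := h.eq_of_adj_of_mem_group (.inr hy) (.inr hz) hyz
  have hx := h.mem_B_of_adj_of_adj ha hy hax hxy
  obtain rfl := h.eq_of_not_adj hx hz hxz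
  exact hx

theorem mem_C_of_mem_B_of_not_adj (h : IsLantern G A D Bs Cs i₀) {i : ι} (hx : x ∈ Bs i)
    (hy : y ∈ Bs i ∪ Cs i) (hxy : x ≠ y) (hn : ¬ G.Adj x y) : y ∈ Cs i :=
  hy.resolve_left fun hyB => hn (h.isClique_B i hx hyB hxy)

theorem adj_of_not_adj_of_not_adj (h : IsLantern G A D Bs Cs i₀) {i : ι}
    (hx : x ∈ Bs i ∪ Cs i) (hy : y ∈ Bs i ∪ Cs i) (hz : z ∈ Bs i ∪ Cs i) (hxy : x ≠ y)
    (hyz : y ≠ z) (hxz : x ≠ z) (hnxy : ¬ G.Adj x y) (hnyz : ¬ G.Adj y z) : G.Adj x z := by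
  rcases hx with hx | hx
  · have hyC := h.mem_C_of_mem_B_of_not_adj hx hy hxy hnxy
    have hzB := h.symm.mem_C_of_mem_B_of_not_adj hyC (Or.symm hz) hyz hnyz
    exact h.isClique_B i hx hzB hxz
  · have hyB := h.symm.mem_C_of_mem_B_of_not_adj hx (Or.symm hy) hxy hnxy
    have hzC := h.mem_C_of_mem_B_of_not_adj hyB hz hyz hnyz
    exact h.isClique_C i hx hzC hxz

/-- The edges between `Bs i` and `Cs i` contain no induced matching of size two. -/
theorem adj_of_adj_of_adj_of_not_adj (h : IsLantern G A D Bs Cs i₀) {i : ι} {b b' c c' : V}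
    (hb : b ∈ Bs i) (hb' : b' ∈ Bs i) (hc : c ∈ Cs i) (hc' : c' ∈ Cs i) (hbc : G.Adj b c)
    (hbc' : G.Adj b' c') (hnbc' : ¬ G.Adj b c') : G.Adj b' c := by
  obtain rfl := h.eq_of_not_adj hb hc' hnbc'
  by_contra hnb'c
  rcases h.chained_B_C.1 b hb b' hb' with hsub | hsub
  · exact hnb'c (hsub ⟨hc, hbc⟩).2
  · exact hnbc' (hsub ⟨hc', hbc'⟩).2

theorem exists_adj_C (h : IsLantern G A D Bs Cs i₀) {i : ι} (hx : x ∈ Bs i) :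
    ∃ c ∈ Cs i, G.Adj x c := by
  by_cases hi : i = i₀
  · subst hi
    obtain ⟨c, hc, hcB⟩ := h.chained_C_B.2
    exact ⟨c, hc, (hcB x hx).symm⟩
  · obtain ⟨c, hc⟩ := h.C_nonempty i
    exact ⟨c, hc, h.complete_B_C i hi x hx c hc⟩

theorem exists_group_disjoint_clique [Nontrivial ι] (h : IsLantern G A D Bs Cs i₀) {K : Set V}
    (hK : G.IsClique K) : ∃ j, ∀ x ∈ Bs j ∪ Cs j, x ∉ K := by
  by_cases hmeet : ∃ i, ∃ x ∈ Bs i ∪ Cs i, x ∈ K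
  · obtain ⟨i, x, hx, hxK⟩ := hmeet
    obtain ⟨j, hji⟩ := exists_ne i
    refine ⟨j, fun y hy hyK => h.anticomplete_groups i j hji.symm x hx y hy (hK hxK hyK ?_)⟩
    exact (h.disjoint_groups i j hji.symm).ne_of_mem hx hy
  · push Not at hmeet
    obtain ⟨j⟩ := ‹Nontrivial ι›.to_nonempty
    exact ⟨j, hmeet j⟩

theorem connected_induce_diff_of_disjoint_D [Nontrivial ι] (h : IsLantern G A D Bs Cs i₀)
    {K : Set V} (hK : G.IsClique K) (hKD : ∀ d ∈ D, d ∉ K) :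
    (G.induce (Set.univ \ K)).Connected := by
  obtain ⟨d, hd⟩ := h.D_nonempty
  have hdK := hKD d hd
  let out (x : V) (hx : x ∉ K) : (Set.univ \ K : Set V) := ⟨x, Set.mem_univ x, hx⟩
  have reach_of_adj {x y : V} (hx : x ∉ K) (hy : y ∉ K) (hxy : G.Adj x y) :
      (G.induce (Set.univ \ K)).Reachable (out x hx) (out y hy) := Adj.reachable hxy
  have reach_C {i : ι} {x : V} (hx : x ∈ Cs i) (hxK : x ∉ K) :
      (G.induce (Set.univ \ K)).Reachable (out x hxK) (out d hdK) :=
    reach_of_adj hxK hdK (h.complete_D_C i d hd x hx).symm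
  obtain ⟨j, hj⟩ := h.exists_group_disjoint_clique hK
  obtain ⟨b, hb⟩ := h.B_nonempty j
  obtain ⟨c, hc, hbc⟩ := h.exists_adj_C hb
  have hbK := hj b (.inl hb)
  have hcK := hj c (.inr hc)
  have reach_A {x : V} (hx : x ∈ A) (hxK : x ∉ K) :
      (G.induce (Set.univ \ K)).Reachable (out x hxK) (out d hdK) :=
    ((reach_of_adj hxK hbK (h.complete_A_B j x hx b hb)).trans (reach_of_adj hbK hcK hbc)).trans
      (reach_C hc hcK)
  rw [connected_iff_exists_forall_reachable]
  refine ⟨out d hdK, fun ⟨x, _, hxK⟩ => Reachable.symm ?_⟩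
  rcases h.cover x with hx | hx | ⟨i, hx⟩ | ⟨i, hx⟩
  · exact reach_A hx hxK
  · obtain rfl | hxd := eq_or_ne x d
    · rfl
    · exact reach_of_adj hxK hdK (h.isClique_D hx hd hxd)
  · obtain ⟨c', hc', hxc'⟩ := h.exists_adj_C hx
    by_cases hc'K : c' ∈ K
    · obtain ⟨a, ha⟩ := h.A_nonempty
      have haK : a ∉ K := fun haK => h.anticomplete_A_C i a ha c' hc'
        (hK haK hc'K ((h.disjoint_A_C i).ne_of_mem ha hc'))
      exact (reach_of_adj hxK haK (h.complete_A_B i a ha x hx).symm).trans (reach_A ha haK)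
    · exact (reach_of_adj hxK hc'K hxc').trans (reach_C hc' hc'K)
  · exact reach_C hx hxK

theorem not_hasCliqueCutset [Nontrivial ι] (h : IsLantern G A D Bs Cs i₀) :
    ¬ HasCliqueCutset G := by
  rintro ⟨K, -, -, hK, hdisconn⟩
  by_cases hKD : ∀ d ∈ D, d ∉ K
  · exact hdisconn (h.connected_induce_diff_of_disjoint_D hK hKD)
  · push Not at hKD
    obtain ⟨d, hd, hdK⟩ := hKD
    refine hdisconn (h.symm.connected_induce_diff_of_disjoint_D hK fun a ha haK => ?_)
    exact h.anticomplete_A_D a ha d hd (hK haK hdK (h.disjoint_A_D.ne_of_mem ha hd))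

theorem not_induced_pathG_seven_of_mem_A (h : IsLantern G A D Bs Cs i₀) (f : Fin 7 ↪ V)
    (hf : ∀ s t, G.Adj (f s) (f t) ↔ (pathG 7).Adj s t) {p : Fin 7} (hp : f p ∈ A) : False := by
  simp only [pathG_adj] at hf
  by_cases hD : ∃ q, f q ∈ D
  · obtain ⟨q, hq⟩ := hD
    have near (s : Fin 7) : (s = p ∨ p.val + 1 = s.val ∨ s.val + 1 = p.val) ∨
        (s = q ∨ q.val + 1 = s.val ∨ s.val + 1 = q.val) := by
      simpa only [f.injective.eq_iff, hf] using h.eq_or_adj_of_mem_A_of_mem_D hp hq (f s)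
    -- a window of three consecutive positions contains at most one of `0, 3, 6`
    have h0 := near 0
    have h3 := near 3
    have h6 := near 6
    omega
  push Not at hD
  have hC (s : Fin 7) (hs : s ≠ p) (hn : ¬ (p.val + 1 = s.val ∨ s.val + 1 = p.val)) :
      ∃ i, f s ∈ Cs i :=
    h.mem_C_of_not_adj hp (f.injective.ne hs) (by rwa [hf]) (hD s)
  have no_C_run (s t u : Fin 7) (hst : s.val + 1 = t.val) (htu : t.val + 1 = u.val)
      (hs : ∃ i, f s ∈ Cs i) (ht : ∃ i, f t ∈ Cs i) (hu : ∃ i, f u ∈ Cs i) : False := by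
    obtain ⟨_, hs⟩ := hs
    obtain ⟨_, ht⟩ := ht
    obtain ⟨_, hu⟩ := hu
    exact (hf s u).not.2 (by omega) <| h.adj_of_adj_of_adj_of_mem_C hs ht hu
      ((hf s t).2 (by omega)) ((hf t u).2 (by omega)) (f.injective.ne (by omega))
  rcases (show p.val ≤ 2 ∨ p.val = 3 ∨ 4 ≤ p.val by omega) with hp3 | hp3 | hp3
  · exact no_C_run 4 5 6 rfl rfl (hC 4 (by omega) (by omega)) (hC 5 (by omega) (by omega))
      (hC 6 (by omega) (by omega))
  · obtain rfl : p = 3 := Fin.ext hp3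
    obtain ⟨_, h0⟩ := hC 0 (by omega) (by omega)
    obtain ⟨_, h1⟩ := hC 1 (by omega) (by omega)
    obtain ⟨_, h5⟩ := hC 5 (by omega) (by omega)
    obtain ⟨_, h6⟩ := hC 6 (by omega) (by omega)
    have h2 := h.mem_B_i₀_of_induced_path hp h1 h0 ((hf 3 2).2 (by omega))
      ((hf 2 1).2 (by omega)) ((hf 1 0).2 (by omega)) ((hf 2 0).not.2 (by omega))
    have h4 := h.mem_B_i₀_of_induced_path hp h5 h6 ((hf 3 4).2 (by omega))
      ((hf 4 5).2 (by omega)) ((hf 5 6).2 (by omega)) ((hf 4 6).not.2 (by omega))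
    exact (hf 2 4).not.2 (by omega) (h.isClique_B i₀ h2 h4 (f.injective.ne (by omega)))
  · exact no_C_run 0 1 2 rfl rfl (hC 0 (by omega) (by omega)) (hC 1 (by omega) (by omega))
      (hC 2 (by omega) (by omega))

theorem not_induced_pathG_seven_of_not_mem (h : IsLantern G A D Bs Cs i₀) (f : Fin 7 ↪ V)
    (hf : ∀ s t, G.Adj (f s) (f t) ↔ (pathG 7).Adj s t) (hA : ∀ s, f s ∉ A)
    (hD : ∀ s, f s ∉ D) : False := by
  simp only [pathG_adj] at hf
  obtain ⟨i, h0⟩ := h.exists_mem_group (hA 0) (hD 0)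
  have step {s t : Fin 7} (hst : s.val + 1 = t.val) (hs : f s ∈ Bs i ∪ Cs i) :
      f t ∈ Bs i ∪ Cs i :=
    h.mem_group_of_adj hs ((hf s t).2 (.inl hst)) (hA t) (hD t)
  have h2 : f 2 ∈ Bs i ∪ Cs i := step (s := 1) rfl (step (s := 0) rfl h0)
  have h4 : f 4 ∈ Bs i ∪ Cs i := step (s := 3) rfl (step (s := 2) rfl h2)
  exact (hf 0 4).not.2 (by omega) <| h.adj_of_not_adj_of_not_adj h0 h2 h4
    (f.injective.ne (by omega)) (f.injective.ne (by omega)) (f.injective.ne (by omega))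
    ((hf 0 2).not.2 (by omega)) ((hf 2 4).not.2 (by omega))

theorem free_pathG_seven (h : IsLantern G A D Bs Cs i₀) : Free G (pathG 7) := by
  rintro ⟨f, -, hf⟩
  by_cases hA : ∃ p, f p ∈ A
  · obtain ⟨p, hp⟩ := hA
    exact h.not_induced_pathG_seven_of_mem_A f hf hp
  by_cases hD : ∃ p, f p ∈ D
  · obtain ⟨p, hp⟩ := hD
    exact h.symm.not_induced_pathG_seven_of_mem_A f hf hp
  push Not at hA hD
  exact h.not_induced_pathG_seven_of_not_mem f hf hA hD

variable {k : ℕ} {g : ℕ → V}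

theorem hole_eq_six_of_mem_A_of_mem_D (h : IsLantern G A D Bs Cs i₀) (hk : 4 ≤ k)
    (hs : IsHoleSeq G k g) (hA : g 0 ∈ A) {q : ℕ} (hqk : q < k) (hq : g q ∈ D) : k = 6 := by
  have hq0 : q ≠ 0 := by
    rintro rfl
    exact h.disjoint_A_D.ne_of_mem hA hq rfl
  have hq1 : ¬ (q = 1 ∨ q + 1 = k) := fun hq1 =>
    h.anticomplete_A_D _ hA _ hq (hs.adj (a := 0) (b := q))
  -- `g 0` and `g q` have no common neighbour, such as `g 1` or `g (k - 1)`
  have hq2 : q ≠ 2 := by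
    rintro rfl
    exact h.not_adj_of_adj_A hA hq (hs.adj (a := 0) (b := 1)) hs.adj
  have hq2' : q + 2 ≠ k := by
    intro hqk2
    exact h.not_adj_of_adj_A hA hq (hs.adj (a := 0) (b := k - 1)) hs.adj
  have near {s : ℕ} (hsk : s < k) : (s = 0 ∨ s = 1 ∨ s + 1 = k) ∨
      (s = q ∨ q + 1 = s ∨ s + 1 = q ∨ (q + 1 = k ∧ s = 0) ∨ (s + 1 = k ∧ q = 0)) := by
    have := h.eq_or_adj_of_mem_A_of_mem_D hA hq (g s)
    rw [hs.eq_iff hsk (by omega), hs.eq_iff hsk hqk, hs.adj_iff (by omega) hsk,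
      hs.adj_iff hqk hsk] at this
    omega
  -- positions `2` and `5` cannot both lie within distance one of `q`
  have h2 := near (s := 2) (by omega)
  obtain hk7 | hk7 := lt_or_ge k 7
  · omega
  · have h5 := near (s := 5) (by omega)
    omega

theorem false_of_hole_of_mem_A (h : IsLantern G A D Bs Cs i₀) (hk : 4 ≤ k)
    (hs : IsHoleSeq G k g) (hA : g 0 ∈ A) (hD : ∀ q < k, g q ∉ D) : False := by
  have hC {s : ℕ} (hs2 : 2 ≤ s) (hsk : s + 2 ≤ k) : ∃ i, g s ∈ Cs i :=
    h.mem_C_of_not_adj hA hs.ne hs.not_adj (hD s (by omega))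
  obtain ⟨i, h2⟩ := hC (s := 2) le_rfl (by omega)
  obtain hk5 | hk6 := (show k ≤ 5 ∨ 6 ≤ k by omega)
  · -- both neighbours of `g 0` on the hole lie in the clique `Bs i`
    have hk2 : g (k - 2) ∈ Cs i := by
      obtain rfl | rfl : k = 4 ∨ k = 5 := by omega
      · exact h2
      · obtain ⟨j, h3⟩ := hC (s := 3) (by omega) (by omega)
        obtain rfl := h.eq_of_adj_of_mem_group (.inr h2) (.inr h3) hs.adj
        exact h3
    have h1 := h.mem_B_of_adj_of_adj hA h2 (hs.adj (a := 0) (b := 1)) hs.adj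
    have hk1 := h.mem_B_of_adj_of_adj hA hk2 (hs.adj (a := 0) (b := k - 1)) hs.adj
    exact absurd (h.isClique_B i h1 hk1 hs.ne) hs.not_adj
  · obtain ⟨_, h3⟩ := hC (s := 3) (by omega) (by omega)
    obtain ⟨_, h4⟩ := hC (s := 4) (by omega) (by omega)
    exact absurd (h.adj_of_adj_of_adj_of_mem_C h2 h3 h4 hs.adj hs.adj hs.ne) hs.not_adj

theorem hole_eq_six_of_mem_A (h : IsLantern G A D Bs Cs i₀) (hk : 4 ≤ k) (hs : IsHoleSeq G k g)
    (hA : g 0 ∈ A) : k = 6 := by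
  by_cases hD : ∃ q < k, g q ∈ D
  · obtain ⟨q, hqk, hq⟩ := hD
    exact h.hole_eq_six_of_mem_A_of_mem_D hk hs hA hqk hq
  · push Not at hD
    exact (h.false_of_hole_of_mem_A hk hs hA hD).elim

theorem false_of_hole_in_group_of_mem_B (h : IsLantern G A D Bs Cs i₀) (hk : 4 ≤ k)
    (hs : IsHoleSeq G k g) {i : ι} (h0 : g 0 ∈ Bs i) (hall : ∀ n < k, g n ∈ Bs i ∪ Cs i) :
    False := by
  have h2 := h.mem_C_of_mem_B_of_not_adj h0 (hall 2 (by omega)) hs.ne hs.not_adj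
  obtain rfl | rfl | hk6 : k = 4 ∨ k = 5 ∨ 6 ≤ k := by omega
  · rcases hall 1 (by omega) with h1 | h1
    · have h3 := h.mem_C_of_mem_B_of_not_adj h1 (hall 3 (by omega)) hs.ne hs.not_adj
      exact absurd (h.adj_of_adj_of_adj_of_not_adj h0 h1 h3 h2 hs.adj hs.adj hs.not_adj)
        hs.not_adj
    · have h3 := h.symm.mem_C_of_mem_B_of_not_adj h1 (Or.symm (hall 3 (by omega))) hs.ne
        hs.not_adj
      exact absurd (h.adj_of_adj_of_adj_of_not_adj h0 h3 h1 h2 hs.adj hs.adj hs.not_adj)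
        hs.not_adj
  · have h4 := h.symm.mem_C_of_mem_B_of_not_adj h2 (Or.symm (hall 4 (by omega))) hs.ne
      hs.not_adj
    have h1 := h.mem_C_of_mem_B_of_not_adj h4 (hall 1 (by omega)) hs.ne hs.not_adj
    have h3 := h.symm.mem_C_of_mem_B_of_not_adj h1 (Or.symm (hall 3 (by omega))) hs.ne
      hs.not_adj
    exact absurd (h.isClique_B i h0 h3 hs.ne) hs.not_adj
  · have h4 := h.symm.mem_C_of_mem_B_of_not_adj h2 (Or.symm (hall 4 (by omega))) hs.ne
      hs.not_adj
    exact absurd (h.isClique_B i h0 h4 hs.ne) hs.not_adj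

theorem false_of_hole_avoiding_A_D (h : IsLantern G A D Bs Cs i₀) (hk : 4 ≤ k)
    (hs : IsHoleSeq G k g) (hA : ∀ n < k, g n ∉ A) (hD : ∀ n < k, g n ∉ D) : False := by
  obtain ⟨i, h0⟩ := h.exists_mem_group (hA 0 (by omega)) (hD 0 (by omega))
  have hall : ∀ n < k, g n ∈ Bs i ∪ Cs i := by
    intro n hn
    induction n with
    | zero => exact h0
    | succ n ih => exact h.mem_group_of_adj (ih (by omega)) hs.adj (hA _ hn) (hD _ hn)
  rcases h0 with h0 | h0
  · exact h.false_of_hole_in_group_of_mem_B hk hs h0 hall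
  · exact h.symm.false_of_hole_in_group_of_mem_B hk hs h0 fun n hn => Or.symm (hall n hn)

theorem hole_length_eq_six (h : IsLantern G A D Bs Cs i₀) (hk : 4 ≤ k)
    (hc : ContainsInducedOn G Set.univ (cycG k)) : k = 6 := by
  obtain ⟨f, -, hf⟩ := hc
  have hs (p : ZMod k) := isHoleSeq_of_induced (by omega) f hf p
  by_cases hA : ∃ p, f p ∈ A
  · obtain ⟨p, hp⟩ := hA
    exact h.hole_eq_six_of_mem_A hk (hs p) (by simpa using hp)
  by_cases hD : ∃ p, f p ∈ D
  · obtain ⟨p, hp⟩ := hD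
    exact h.symm.hole_eq_six_of_mem_A hk (hs p) (by simpa using hp)
  push Not at hA hD
  exact (h.false_of_hole_avoiding_A_D hk (hs 0) (fun n _ => hA _) fun n _ => hD _).elim

end IsLantern

end Paper

theorem statement_15_general {V : Type*} (R : SimpleGraph V)
    (h : IsLanternOn R Set.univ) :
    Paper.Free R (pathG 7) ∧
    (∀ k : ℕ, 4 ≤ k → ContainsInducedOn R Set.univ (cycG k) → k = 6) ∧
    ¬ HasCliqueCutset R := by
  obtain ⟨r, hr, A, D, Bs, Cs, hp⟩ := h
  have hL := hp.isLantern (by omega)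
  have : Nontrivial (Fin r) := Fin.nontrivial_iff_two_le.2 (by omega)
  exact ⟨hL.free_pathG_seven, fun k hk => hL.hole_length_eq_six hk, hL.not_hasCliqueCutset⟩

theorem statement_15 {V : Type*} [Fintype V] (R : SimpleGraph V)
    (h : IsLanternOn R Set.univ) :
    Paper.Free R (pathG 7) ∧
    (∀ k : ℕ, 4 ≤ k → ContainsInducedOn R Set.univ (cycG k) → k = 6) ∧
    ¬ HasCliqueCutset R :=
  statement_15_general R h
end

section
/- Let G be a finite simple (P_7, C_4, C_5, C_7)-free graph, let r ≥ 3 be an integer such that G contains an induced Θ_3^r, let T be an inclusion-wise maximal induced thickened Θ_3^r in G, and let (A, B_1,...,B_r, C_1,...,C_r, D) be a good partition for T. Then X = L_A ∪ L_D ∪ ⋃_{i=1}^r (T_{B_i} ∪ R_{B_i} ∪ T_{C_i} ∪ R_{C_i}), where X is the set of vertices of G outside T that are mixed on V(T). -/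
open SimpleGraph

open Paper

/-!
Let `v` be a vertex outside `T` that is mixed on `T`. If `v` had neighbours in both `A` and `D`,
induced `C₄`s and `C₅`s would make it complete to every `B_i`, then to every `C_i`, then to
`A` and `D`, so it would not be mixed. Using the symmetry `A ↔ D`, `B_i ↔ C_i` we may therefore
assume that `v` is anticomplete to `D`. Forbidden `C₄`, `C₅` and `P₇` then force:
* `v` has neighbours in at most one strand `B_i ∪ C_i`: with neighbours in two `B`'s, `v` is
  complete to `A` and to every `B_j` and anticomplete to every `C_j`, so it could be added to
  `A`, contradicting maximality;
* a neighbour in `C_i` forces a neighbour in `B_i`, and a neighbour in `B_i` forces `v` to be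
  complete to `A`;
* if `v` also has a neighbour in `C_i`, it is complete to `B_i` and mixed on `C_i`, since
  otherwise it could be added to `B_i`.
These are exactly the cases `L_A`, `R_{B_i}` and `T_{B_i}`.
-/

namespace Paper

variable {V : Type*} {G : SimpleGraph V}

theorem Free.false_of_C4 (h : Free G (cycG 4)) {x₀ x₁ x₂ x₃ : V}
    (h₀₁ : G.Adj x₀ x₁) (h₁₂ : G.Adj x₁ x₂) (h₂₃ : G.Adj x₂ x₃) (h₃₀ : G.Adj x₃ x₀)
    (n₀₂ : ¬ G.Adj x₀ x₂) (n₁₃ : ¬ G.Adj x₁ x₃) (m₀₂ : x₀ ≠ x₂) (m₁₃ : x₁ ≠ x₃) : False := by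
  refine h ⟨⟨![x₀, x₁, x₂, x₃], ?_⟩, fun _ => trivial, ?_⟩
  · intro a b hab
    fin_cases a <;> fin_cases b <;> first | rfl | simp_all [G.adj_comm]
  · intro (a : Fin 4) (b : Fin 4)
    show G.Adj (![x₀, x₁, x₂, x₃] a) (![x₀, x₁, x₂, x₃] b) ↔ a ≠ b ∧ (a + 1 = b ∨ b + 1 = a)
    fin_cases a <;> fin_cases b <;> simp [G.adj_comm, h₃₀.symm, *]

theorem Free.false_of_C5 (h : Free G (cycG 5)) {x₀ x₁ x₂ x₃ x₄ : V}
    (h₀₁ : G.Adj x₀ x₁) (h₁₂ : G.Adj x₁ x₂) (h₂₃ : G.Adj x₂ x₃) (h₃₄ : G.Adj x₃ x₄)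
    (h₄₀ : G.Adj x₄ x₀) (n₀₂ : ¬ G.Adj x₀ x₂) (n₀₃ : ¬ G.Adj x₀ x₃) (n₁₃ : ¬ G.Adj x₁ x₃)
    (n₁₄ : ¬ G.Adj x₁ x₄) (n₂₄ : ¬ G.Adj x₂ x₄) : False := by
  refine h ⟨⟨![x₀, x₁, x₂, x₃, x₄], ?_⟩, fun _ => trivial, ?_⟩
  · intro a b hab
    fin_cases a <;> fin_cases b <;> first | rfl | simp_all [G.adj_comm]
  · intro (a : Fin 5) (b : Fin 5)
    show G.Adj (![x₀, x₁, x₂, x₃, x₄] a) (![x₀, x₁, x₂, x₃, x₄] b) ↔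
      a ≠ b ∧ (a + 1 = b ∨ b + 1 = a)
    fin_cases a <;> fin_cases b <;> simp [G.adj_comm, h₄₀.symm, *]

theorem Free.false_of_P7 (h : Free G (pathG 7)) {x₀ x₁ x₂ x₃ x₄ x₅ x₆ : V}
    (h₀₁ : G.Adj x₀ x₁) (h₁₂ : G.Adj x₁ x₂) (h₂₃ : G.Adj x₂ x₃) (h₃₄ : G.Adj x₃ x₄)
    (h₄₅ : G.Adj x₄ x₅) (h₅₆ : G.Adj x₅ x₆)
    (n₀₂ : ¬ G.Adj x₀ x₂) (n₀₃ : ¬ G.Adj x₀ x₃) (n₀₄ : ¬ G.Adj x₀ x₄) (n₀₅ : ¬ G.Adj x₀ x₅)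
    (n₀₆ : ¬ G.Adj x₀ x₆) (n₁₃ : ¬ G.Adj x₁ x₃) (n₁₄ : ¬ G.Adj x₁ x₄) (n₁₅ : ¬ G.Adj x₁ x₅)
    (n₁₆ : ¬ G.Adj x₁ x₆) (n₂₄ : ¬ G.Adj x₂ x₄) (n₂₅ : ¬ G.Adj x₂ x₅) (n₂₆ : ¬ G.Adj x₂ x₆)
    (n₃₅ : ¬ G.Adj x₃ x₅) (n₃₆ : ¬ G.Adj x₃ x₆) (n₄₆ : ¬ G.Adj x₄ x₆) : False := by
  refine h ⟨⟨![x₀, x₁, x₂, x₃, x₄, x₅, x₆], ?_⟩, fun _ => trivial, ?_⟩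
  · intro a b hab
    fin_cases a <;> fin_cases b <;> first | rfl | simp_all [G.adj_comm]
  · intro a b
    show G.Adj (![x₀, x₁, x₂, x₃, x₄, x₅, x₆] a) (![x₀, x₁, x₂, x₃, x₄, x₅, x₆] b) ↔ _
    fin_cases a <;> fin_cases b <;> simp [pathG, fromRel_adj, G.adj_comm, *]

theorem completeTo_insert_left {v : V} {X Y : Set V} :
    CompleteTo G (insert v X) Y ↔ (∀ y ∈ Y, G.Adj v y) ∧ CompleteTo G X Y :=
  Set.forall_mem_insert

theorem anticompleteTo_insert_left {v : V} {X Y : Set V} :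
    AnticompleteTo G (insert v X) Y ↔ (∀ y ∈ Y, ¬ G.Adj v y) ∧ AnticompleteTo G X Y :=
  Set.forall_mem_insert

theorem mem_update_insert {ι α : Type*} [DecidableEq ι] {s : ι → Set α} {i j : ι} {a x : α} :
    x ∈ Function.update s i (insert a (s i)) j ↔ (j = i ∧ x = a) ∨ x ∈ s j := by
  rcases eq_or_ne j i with rfl | hj <;> simp [*]

theorem iUnion_update_insert {ι α : Type*} [DecidableEq ι] (s : ι → Set α) (i : ι) (a : α) :
    ⋃ j, Function.update s i (insert a (s i)) j = insert a (⋃ j, s j) := by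
  ext x
  simp only [Set.mem_iUnion, Set.mem_insert_iff, mem_update_insert]
  constructor
  · rintro ⟨j, ⟨-, rfl⟩ | hx⟩
    exacts [.inl rfl, .inr ⟨j, hx⟩]
  · rintro (rfl | ⟨j, hx⟩)
    exacts [⟨i, .inl ⟨rfl, rfl⟩⟩, ⟨j, .inr hx⟩]

def IsMaximalThickThetaOn (G : SimpleGraph V) (S : Set V) (r : ℕ) : Prop :=
  ∀ S' : Set V, S ⊆ S' →
    (∃ (A' D' : Set V) (Bs' Cs' : Fin r → Set V), IsThickThetaPartitionOn G S' r A' D' Bs' Cs') →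
      S' = S

theorem IsMaximalThickThetaOn.mem_of_insert {S A D : Set V} {r : ℕ} {Bs Cs : Fin r → Set V}
    {v : V} (hmax : IsMaximalThickThetaOn G S r)
    (hT : IsThickThetaPartitionOn G (insert v S) r A D Bs Cs) : v ∈ S :=
  hmax _ (Set.subset_insert v S) ⟨A, D, Bs, Cs, hT⟩ ▸ Set.mem_insert v S

namespace IsThickThetaPartitionOn

variable {S A D : Set V} {r : ℕ} {Bs Cs : Fin r → Set V} {i j : Fin r} {a b c d v x y : V}

theorem mem_cases (hT : IsThickThetaPartitionOn G S r A D Bs Cs) (hx : x ∈ S) :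
    x ∈ A ∨ x ∈ D ∨ (∃ i, x ∈ Bs i) ∨ ∃ i, x ∈ Cs i := by
  rw [← hT.1] at hx
  simpa only [Set.mem_union, Set.mem_iUnion, or_assoc] using hx

theorem A_subset (hT : IsThickThetaPartitionOn G S r A D Bs Cs) : A ⊆ S :=
  hT.1 ▸ fun _ hx => .inl (.inl (.inl hx))

theorem D_subset (hT : IsThickThetaPartitionOn G S r A D Bs Cs) : D ⊆ S :=
  hT.1 ▸ fun _ hx => .inl (.inl (.inr hx))

theorem B_subset (hT : IsThickThetaPartitionOn G S r A D Bs Cs) (i : Fin r) : Bs i ⊆ S :=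
  hT.1 ▸ fun _ hx => .inl (.inr (Set.mem_iUnion.2 ⟨i, hx⟩))

theorem C_subset (hT : IsThickThetaPartitionOn G S r A D Bs Cs) (i : Fin r) : Cs i ⊆ S :=
  hT.1 ▸ fun _ hx => .inr (Set.mem_iUnion.2 ⟨i, hx⟩)

theorem A_nonempty (hT : IsThickThetaPartitionOn G S r A D Bs Cs) : A.Nonempty :=
  hT.2.2.2.2.2.1

theorem D_nonempty (hT : IsThickThetaPartitionOn G S r A D Bs Cs) : D.Nonempty :=
  hT.2.2.2.2.2.2.1

theorem B_nonempty (hT : IsThickThetaPartitionOn G S r A D Bs Cs) (i : Fin r) :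
    (Bs i).Nonempty :=
  (hT.2.2.2.2.2.2.2.1 i).1

theorem C_nonempty (hT : IsThickThetaPartitionOn G S r A D Bs Cs) (i : Fin r) :
    (Cs i).Nonempty :=
  (hT.2.2.2.2.2.2.2.1 i).2

theorem ne_of_mem_A_of_mem_C (hT : IsThickThetaPartitionOn G S r A D Bs Cs) (ha : a ∈ A)
    (hc : c ∈ Cs i) : a ≠ c :=
  (hT.2.2.1 i).2.1.ne_of_mem ha hc

theorem ne_of_mem_B_of_mem_B (hT : IsThickThetaPartitionOn G S r A D Bs Cs) (hij : i ≠ j)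
    (hx : x ∈ Bs i) (hy : y ∈ Bs j) : x ≠ y :=
  (hT.2.2.2.2.1 i j hij).1.ne_of_mem hx hy

theorem not_adj_A_D (hT : IsThickThetaPartitionOn G S r A D Bs Cs) (ha : a ∈ A) (hd : d ∈ D) :
    ¬ G.Adj a d :=
  hT.2.2.2.2.2.2.2.2.2.2.2.1 a ha d hd

theorem adj_A_B (hT : IsThickThetaPartitionOn G S r A D Bs Cs) (ha : a ∈ A) (hb : b ∈ Bs i) :
    G.Adj a b :=
  (hT.2.2.2.2.2.2.2.2.2.2.2.2.1 i).1 a ha b hb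

theorem not_adj_A_C (hT : IsThickThetaPartitionOn G S r A D Bs Cs) (ha : a ∈ A)
    (hc : c ∈ Cs i) : ¬ G.Adj a c :=
  (hT.2.2.2.2.2.2.2.2.2.2.2.2.1 i).2 a ha c hc

theorem adj_D_C (hT : IsThickThetaPartitionOn G S r A D Bs Cs) (hd : d ∈ D) (hc : c ∈ Cs i) :
    G.Adj d c :=
  (hT.2.2.2.2.2.2.2.2.2.2.2.2.2.1 i).1 d hd c hc

theorem not_adj_D_B (hT : IsThickThetaPartitionOn G S r A D Bs Cs) (hd : d ∈ D)
    (hb : b ∈ Bs i) : ¬ G.Adj d b :=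
  (hT.2.2.2.2.2.2.2.2.2.2.2.2.2.1 i).2 d hd b hb

theorem adj_B_C (hT : IsThickThetaPartitionOn G S r A D Bs Cs) (hb : b ∈ Bs i)
    (hc : c ∈ Cs i) : G.Adj b c :=
  hT.2.2.2.2.2.2.2.2.2.2.2.2.2.2.1 i b hb c hc

theorem not_adj_B_B (hT : IsThickThetaPartitionOn G S r A D Bs Cs) (hij : i ≠ j)
    (hx : x ∈ Bs i) (hy : y ∈ Bs j) : ¬ G.Adj x y :=
  hT.2.2.2.2.2.2.2.2.2.2.2.2.2.2.2 i j hij x (.inl hx) y (.inl hy)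

theorem not_adj_B_C (hT : IsThickThetaPartitionOn G S r A D Bs Cs) (hij : i ≠ j)
    (hx : x ∈ Bs i) (hy : y ∈ Cs j) : ¬ G.Adj x y :=
  hT.2.2.2.2.2.2.2.2.2.2.2.2.2.2.2 i j hij x (.inl hx) y (.inr hy)

theorem not_adj_C_C (hT : IsThickThetaPartitionOn G S r A D Bs Cs) (hij : i ≠ j)
    (hx : x ∈ Cs i) (hy : y ∈ Cs j) : ¬ G.Adj x y :=
  hT.2.2.2.2.2.2.2.2.2.2.2.2.2.2.2 i j hij x (.inr hx) y (.inr hy)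

theorem swap (hT : IsThickThetaPartitionOn G S r A D Bs Cs) :
    IsThickThetaPartitionOn G S r D A Cs Bs := by
  obtain ⟨hS, hAD, hdisj, hBC, hBB, hA, hD, hne, hAcl, hDcl, hcl, hantiAD, hAB, hDC, hBiCi,
    hstr⟩ := hT
  refine ⟨?_, hAD.symm, fun i => ⟨(hdisj i).2.2.2, (hdisj i).2.2.1, (hdisj i).2.1, (hdisj i).1⟩,
    fun i j => (hBC j i).symm, fun i j hij => (hBB i j hij).symm, hD, hA,
    fun i => (hne i).symm, hDcl, hAcl, fun i => (hcl i).symm,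
    fun d hd a ha h => hantiAD a ha d hd h.symm, hDC, hAB,
    fun i c hc b hb => (hBiCi i b hb c hc).symm,
    fun i j hij x hx y hy => hstr i j hij x hx.symm y hy.symm⟩
  rw [← hS]
  ac_rfl

theorem insert_A (hT : IsThickThetaPartitionOn G S r A D Bs Cs) (hvS : v ∉ S)
    (hvA : ∀ a ∈ A, G.Adj v a) (hvB : ∀ i, ∀ b ∈ Bs i, G.Adj v b)
    (hvD : ∀ d ∈ D, ¬ G.Adj v d) (hvC : ∀ i, ∀ c ∈ Cs i, ¬ G.Adj v c) :
    IsThickThetaPartitionOn G (insert v S) r (insert v A) D Bs Cs := by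
  have hvD' : v ∉ D := fun h => hvS (hT.D_subset h)
  have hvB' : ∀ i, v ∉ Bs i := fun i h => hvS (hT.B_subset i h)
  have hvC' : ∀ i, v ∉ Cs i := fun i h => hvS (hT.C_subset i h)
  obtain ⟨hS, hAD, hdisj, hBC, hBB, -, hD, hne, hAcl, hDcl, hcl, hantiAD, hAB, hDC, hBiCi,
    hstr⟩ := hT
  refine ⟨?_, Set.disjoint_insert_left.2 ⟨hvD', hAD⟩,
    fun i => ⟨Set.disjoint_insert_left.2 ⟨hvB' i, (hdisj i).1⟩,
      Set.disjoint_insert_left.2 ⟨hvC' i, (hdisj i).2.1⟩, (hdisj i).2.2⟩,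
    hBC, hBB, Set.insert_nonempty v A, hD, hne, hAcl.insert fun a ha _ => hvA a ha, hDcl, hcl,
    anticompleteTo_insert_left.2 ⟨hvD, hantiAD⟩,
    fun i => ⟨completeTo_insert_left.2 ⟨hvB i, (hAB i).1⟩,
      anticompleteTo_insert_left.2 ⟨hvC i, (hAB i).2⟩⟩, hDC, hBiCi, hstr⟩
  rw [← hS]
  simp only [Set.insert_union]

theorem insert_B (hT : IsThickThetaPartitionOn G S r A D Bs Cs) (hvS : v ∉ S) {i : Fin r}
    (hvA : ∀ a ∈ A, G.Adj v a) (hvB : ∀ b ∈ Bs i, G.Adj v b) (hvC : ∀ c ∈ Cs i, G.Adj v c)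
    (hvD : ∀ d ∈ D, ¬ G.Adj v d) (hother : ∀ j, j ≠ i → ∀ x ∈ Bs j ∪ Cs j, ¬ G.Adj v x) :
    IsThickThetaPartitionOn G (insert v S) r A D (Function.update Bs i (insert v (Bs i))) Cs := by
  have hmem : ∀ j x, x ∈ Function.update Bs i (insert v (Bs i)) j ∪ Cs j ↔
      (j = i ∧ x = v) ∨ x ∈ Bs j ∪ Cs j := by
    simp only [Set.mem_union, mem_update_insert, or_assoc, implies_true]
  have hvA' : v ∉ A := fun h => hvS (hT.A_subset h)
  have hvD' : v ∉ D := fun h => hvS (hT.D_subset h)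
  have hvB' : ∀ j, v ∉ Bs j := fun j h => hvS (hT.B_subset j h)
  have hvC' : ∀ j, v ∉ Cs j := fun j h => hvS (hT.C_subset j h)
  obtain ⟨hS, hAD, hdisj, hBC, hBB, hA, hD, hne, hAcl, hDcl, hcl, hantiAD, hAB, hDC, hBiCi,
    hstr⟩ := hT
  refine ⟨?_, hAD, fun j => ⟨?_, (hdisj j).2.1, ?_, (hdisj j).2.2.2⟩, fun j k => ?_,
    fun j k hjk => ⟨?_, (hBB j k hjk).2⟩, hA, hD,
    fun j => ⟨(hne j).1.mono fun x hx => mem_update_insert.2 (.inr hx), (hne j).2⟩, hAcl, hDcl,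
    fun j => ⟨?_, (hcl j).2⟩, hantiAD, fun j => ⟨?_, (hAB j).2⟩, fun j => ⟨(hDC j).1, ?_⟩,
    fun j => ?_, fun j k hjk x hx y hy => ?_⟩
  · rw [iUnion_update_insert, ← hS]
    simp only [Set.union_insert, Set.insert_union]
  · refine Set.disjoint_right.2 fun x hx hxA => ?_
    rcases mem_update_insert.1 hx with ⟨-, rfl⟩ | hx
    exacts [hvA' hxA, (hdisj j).1.ne_of_mem hxA hx rfl]
  · refine Set.disjoint_right.2 fun x hx hxD => ?_
    rcases mem_update_insert.1 hx with ⟨-, rfl⟩ | hx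
    exacts [hvD' hxD, (hdisj j).2.2.1.ne_of_mem hxD hx rfl]
  · refine Set.disjoint_left.2 fun x hx hxC => ?_
    rcases mem_update_insert.1 hx with ⟨-, rfl⟩ | hx
    exacts [hvC' k hxC, (hBC j k).ne_of_mem hx hxC rfl]
  · refine Set.disjoint_left.2 fun x hxj hxk => ?_
    rcases mem_update_insert.1 hxj with ⟨rfl, rfl⟩ | hxj' <;>
      rcases mem_update_insert.1 hxk with ⟨rfl, hxv⟩ | hxk'
    exacts [hjk rfl, hvB' k hxk', hvB' j (hxv ▸ hxj'), (hBB j k hjk).1.ne_of_mem hxj' hxk' rfl]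
  · rcases eq_or_ne j i with rfl | hj
    · simpa using (hcl j).1.insert fun b hb _ => hvB b hb
    · simpa [hj] using (hcl j).1
  · intro a ha x hx
    rcases mem_update_insert.1 hx with ⟨-, rfl⟩ | hx
    exacts [(hvA a ha).symm, (hAB j).1 a ha x hx]
  · intro d hd x hx
    rcases mem_update_insert.1 hx with ⟨-, rfl⟩ | hx
    exacts [fun h => hvD d hd h.symm, (hDC j).2 d hd x hx]
  · intro x hx c hc
    rcases mem_update_insert.1 hx with ⟨rfl, rfl⟩ | hx
    exacts [hvC c hc, hBiCi j x hx c hc]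
  · rcases (hmem j x).1 hx with ⟨rfl, rfl⟩ | hx' <;>
      rcases (hmem k y).1 hy with ⟨rfl, rfl⟩ | hy'
    exacts [absurd rfl hjk, hother k (Ne.symm hjk) y hy', fun h => hother j hjk x hx' h.symm,
      hstr j k hjk x hx' y hy']

theorem adj_B_of_adj_A_of_adj_C (hT : IsThickThetaPartitionOn G S r A D Bs Cs)
    (h4 : Free G (cycG 4)) (hvS : v ∉ S) (ha : a ∈ A) (hva : G.Adj v a) (hc : c ∈ Cs i)
    (hvc : G.Adj v c) (hb : b ∈ Bs i) : G.Adj v b := by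
  by_contra hvb
  exact h4.false_of_C4 hva (hT.adj_A_B ha hb) (hT.adj_B_C hb hc) hvc.symm hvb
    (hT.not_adj_A_C ha hc) (ne_of_mem_of_not_mem (hT.B_subset i hb) hvS).symm
    (hT.ne_of_mem_A_of_mem_C ha hc)

theorem adj_A_of_adj_B_of_adj_B (hT : IsThickThetaPartitionOn G S r A D Bs Cs)
    (h4 : Free G (cycG 4)) (hvS : v ∉ S) (hij : i ≠ j) (hx : x ∈ Bs i) (hvx : G.Adj v x)
    (hy : y ∈ Bs j) (hvy : G.Adj v y) (ha : a ∈ A) : G.Adj v a := by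
  by_contra hva
  exact h4.false_of_C4 hvx (hT.adj_A_B ha hx).symm (hT.adj_A_B ha hy) hvy.symm hva
    (hT.not_adj_B_B hij hx hy) (ne_of_mem_of_not_mem (hT.A_subset ha) hvS).symm
    (hT.ne_of_mem_B_of_mem_B hij hx hy)

theorem not_adj_B_of_adj_C (hT : IsThickThetaPartitionOn G S r A D Bs Cs)
    (h4 : Free G (cycG 4)) (h5 : Free G (cycG 5)) (hvS : v ∉ S) (hvD : ∀ d ∈ D, ¬ G.Adj v d)
    (hij : i ≠ j) (hb : b ∈ Bs i) (hc : c ∈ Cs j) (hvc : G.Adj v c) : ¬ G.Adj v b := by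
  intro hvb
  obtain ⟨d, hd⟩ := hT.D_nonempty
  obtain ⟨c', hc'⟩ := hT.C_nonempty i
  by_cases hvc' : G.Adj v c'
  · exact hvD d hd (hT.swap.adj_A_of_adj_B_of_adj_B h4 hvS hij hc' hvc' hc hvc hd)
  · exact h5.false_of_C5 hvc (hT.adj_D_C hd hc).symm (hT.adj_D_C hd hc')
      (hT.adj_B_C hb hc').symm hvb.symm (hvD d hd) hvc' (hT.not_adj_C_C hij.symm hc hc')
      (fun h => hT.not_adj_B_C hij hb hc h.symm) (hT.not_adj_D_B hd hb)

theorem adj_B_of_adj_B_of_adj_B_of_ne (hT : IsThickThetaPartitionOn G S r A D Bs Cs)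
    (h7 : Free G (pathG 7)) (hvD : ∀ d ∈ D, ¬ G.Adj v d)
    (hvC : ∀ k, ∀ c ∈ Cs k, ¬ G.Adj v c) {k : Fin r} (hij : i ≠ j) (hik : i ≠ k)
    (hjk : j ≠ k) (hx : x ∈ Bs i) (hvx : G.Adj v x) (hy : y ∈ Bs j) (hvy : G.Adj v y)
    (hb : b ∈ Bs k) : G.Adj v b := by
  by_contra hvb
  obtain ⟨d, hd⟩ := hT.D_nonempty
  obtain ⟨c, hc⟩ := hT.C_nonempty j
  obtain ⟨c', hc'⟩ := hT.C_nonempty k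
  exact h7.false_of_P7 hvx.symm hvy (hT.adj_B_C hy hc) (hT.adj_D_C hd hc).symm
    (hT.adj_D_C hd hc') (hT.adj_B_C hb hc').symm
    (hT.not_adj_B_B hij hx hy) (hT.not_adj_B_C hij hx hc)
    (fun h => hT.not_adj_D_B hd hx h.symm) (hT.not_adj_B_C hik hx hc')
    (hT.not_adj_B_B hik hx hb) (hvC j c hc) (hvD d hd) (hvC k c' hc') hvb
    (fun h => hT.not_adj_D_B hd hy h.symm) (hT.not_adj_B_C hjk hy hc')
    (hT.not_adj_B_B hjk hy hb) (hT.not_adj_C_C hjk hc hc')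
    (fun h => hT.not_adj_B_C hjk.symm hb hc h.symm) (hT.not_adj_D_B hd hb)

theorem adj_B_of_adj_B_of_adj_B (hT : IsThickThetaPartitionOn G S r A D Bs Cs)
    (h7 : Free G (pathG 7)) (hr : 3 ≤ r) (hvD : ∀ d ∈ D, ¬ G.Adj v d)
    (hvC : ∀ k, ∀ c ∈ Cs k, ¬ G.Adj v c) (hij : i ≠ j) (hx : x ∈ Bs i) (hvx : G.Adj v x)
    (hy : y ∈ Bs j) (hvy : G.Adj v y) (k : Fin r) (hb : b ∈ Bs k) : G.Adj v b := by
  obtain ⟨l, hli, hlj⟩ := Fin.exists_ne_and_ne_of_two_lt i j hr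
  obtain ⟨z, hz⟩ := hT.B_nonempty l
  have hvz := hT.adj_B_of_adj_B_of_adj_B_of_ne h7 hvD hvC hij hli.symm hlj.symm hx hvx hy hvy hz
  rcases eq_or_ne k i with rfl | hki
  · exact hT.adj_B_of_adj_B_of_adj_B_of_ne h7 hvD hvC hlj hli hij.symm hz hvz hy hvy hb
  rcases eq_or_ne k j with rfl | hkj
  · exact hT.adj_B_of_adj_B_of_adj_B_of_ne h7 hvD hvC hli hlj hij hz hvz hx hvx hb
  exact hT.adj_B_of_adj_B_of_adj_B_of_ne h7 hvD hvC hij hki.symm hkj.symm hx hvx hy hvy hb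

theorem not_adj_B_of_adj_B (hT : IsThickThetaPartitionOn G S r A D Bs Cs)
    (h4 : Free G (cycG 4)) (h5 : Free G (cycG 5)) (h7 : Free G (pathG 7)) (hr : 3 ≤ r)
    (hmax : IsMaximalThickThetaOn G S r) (hvS : v ∉ S) (hvD : ∀ d ∈ D, ¬ G.Adj v d)
    (hij : i ≠ j) (hx : x ∈ Bs i) (hvx : G.Adj v x) (hy : y ∈ Bs j) : ¬ G.Adj v y := by
  intro hvy
  have hvC : ∀ k, ∀ c ∈ Cs k, ¬ G.Adj v c := by
    intro k c hc hvc
    rcases eq_or_ne i k with rfl | hik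
    · exact hT.not_adj_B_of_adj_C h4 h5 hvS hvD hij.symm hy hc hvc hvy
    · exact hT.not_adj_B_of_adj_C h4 h5 hvS hvD hik hx hc hvc hvx
  refine hvS (hmax.mem_of_insert (hT.insert_A hvS ?_ ?_ hvD hvC))
  · exact fun a ha => hT.adj_A_of_adj_B_of_adj_B h4 hvS hij hx hvx hy hvy ha
  · exact fun k b hb => hT.adj_B_of_adj_B_of_adj_B h7 hr hvD hvC hij hx hvx hy hvy k hb

theorem eq_of_adj_of_adj (hT : IsThickThetaPartitionOn G S r A D Bs Cs)
    (h4 : Free G (cycG 4)) (h5 : Free G (cycG 5)) (h7 : Free G (pathG 7)) (hr : 3 ≤ r)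
    (hmax : IsMaximalThickThetaOn G S r) (hvS : v ∉ S) (hvD : ∀ d ∈ D, ¬ G.Adj v d)
    (hx : x ∈ Bs i ∪ Cs i) (hvx : G.Adj v x) (hy : y ∈ Bs j ∪ Cs j) (hvy : G.Adj v y) :
    i = j := by
  by_contra hij
  rcases hx with hx | hx <;> rcases hy with hy | hy
  · exact hT.not_adj_B_of_adj_B h4 h5 h7 hr hmax hvS hvD hij hx hvx hy hvy
  · exact hT.not_adj_B_of_adj_C h4 h5 hvS hvD hij hx hy hvy hvx
  · exact hT.not_adj_B_of_adj_C h4 h5 hvS hvD (Ne.symm hij) hy hx hvx hvy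
  · obtain ⟨d, hd⟩ := hT.D_nonempty
    exact hvD d hd (hT.swap.adj_A_of_adj_B_of_adj_B h4 hvS hij hx hvx hy hvy hd)

theorem adj_A_of_adj_B (hT : IsThickThetaPartitionOn G S r A D Bs Cs)
    (h7 : Free G (pathG 7)) (hr : 3 ≤ r) (hvD : ∀ d ∈ D, ¬ G.Adj v d)
    (hother : ∀ j, j ≠ i → ∀ x ∈ Bs j ∪ Cs j, ¬ G.Adj v x) (hb : b ∈ Bs i)
    (hvb : G.Adj v b) (ha : a ∈ A) : G.Adj v a := by
  by_contra hva
  obtain ⟨j, hji, -⟩ := Fin.exists_ne_and_ne_of_two_lt i i hr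
  obtain ⟨k, hki, hkj⟩ := Fin.exists_ne_and_ne_of_two_lt i j hr
  obtain ⟨d, hd⟩ := hT.D_nonempty
  obtain ⟨y, hy⟩ := hT.B_nonempty j
  obtain ⟨c, hc⟩ := hT.C_nonempty j
  obtain ⟨c', hc'⟩ := hT.C_nonempty k
  exact h7.false_of_P7 hvb (hT.adj_A_B ha hb).symm (hT.adj_A_B ha hy) (hT.adj_B_C hy hc)
    (hT.adj_D_C hd hc).symm (hT.adj_D_C hd hc')
    hva (hother j hji y (.inl hy)) (hother j hji c (.inr hc)) (hvD d hd)
    (hother k hki c' (.inr hc')) (hT.not_adj_B_B hji.symm hb hy)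
    (hT.not_adj_B_C hji.symm hb hc) (fun h => hT.not_adj_D_B hd hb h.symm)
    (hT.not_adj_B_C hki.symm hb hc') (hT.not_adj_A_C ha hc) (hT.not_adj_A_D ha hd)
    (hT.not_adj_A_C ha hc') (fun h => hT.not_adj_D_B hd hy h.symm)
    (hT.not_adj_B_C hkj.symm hy hc') (hT.not_adj_C_C hkj.symm hc hc')

theorem exists_adj_B_of_adj_C (hT : IsThickThetaPartitionOn G S r A D Bs Cs)
    (h4 : Free G (cycG 4)) (h7 : Free G (pathG 7)) (hr : 3 ≤ r) (hvS : v ∉ S)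
    (hvD : ∀ d ∈ D, ¬ G.Adj v d) (hother : ∀ j, j ≠ i → ∀ x ∈ Bs j ∪ Cs j, ¬ G.Adj v x)
    (hc : c ∈ Cs i) (hvc : G.Adj v c) : ∃ b ∈ Bs i, G.Adj v b := by
  by_contra! hvB
  obtain ⟨b, hb⟩ := hT.B_nonempty i
  obtain ⟨d, hd⟩ := hT.D_nonempty
  have hvA : ∀ a ∈ A, ¬ G.Adj v a := fun a ha hva =>
    hvB b hb (hT.adj_B_of_adj_A_of_adj_C h4 hvS ha hva hc hvc hb)
  exact hvD d hd (hT.swap.adj_A_of_adj_B h7 hr hvA (fun j hj x hx => hother j hj x hx.symm)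
    hc hvc hd)

theorem not_adj_of_not_mem (hT : IsThickThetaPartitionOn G S r A D Bs Cs)
    (hvD : ∀ d ∈ D, ¬ G.Adj v d) (hother : ∀ j, j ≠ i → ∀ x ∈ Bs j ∪ Cs j, ¬ G.Adj v x)
    (hx : x ∈ S) (hxA : x ∉ A) (hxB : x ∉ Bs i) (hxC : x ∉ Cs i) : ¬ G.Adj v x := by
  rcases hT.mem_cases hx with hxA' | hxD | ⟨j, hxj⟩ | ⟨j, hxj⟩
  · exact absurd hxA' hxA
  · exact hvD x hxD
  · exact hother j (by rintro rfl; exact hxB hxj) x (.inl hxj)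
  · exact hother j (by rintro rfl; exact hxC hxj) x (.inr hxj)

theorem mem_setL (hT : IsThickThetaPartitionOn G S r A D Bs Cs) (hv : v ∈ setX G S)
    (hvD : ∀ d ∈ D, ¬ G.Adj v d) (hvBC : ∀ j, ∀ x ∈ Bs j ∪ Cs j, ¬ G.Adj v x) :
    v ∈ setL G S A := by
  have hout : ∀ x ∈ S, x ∉ A → ¬ G.Adj v x := by
    intro x hx hxA
    rcases hT.mem_cases hx with h | h | ⟨j, h⟩ | ⟨j, h⟩
    exacts [absurd h hxA, hvD x h, hvBC j x (.inl h), hvBC j x (.inr h)]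
  obtain ⟨x, hx, hvx⟩ := hv.2.1
  exact ⟨hv, ⟨x, not_not.1 fun hxA => hout x hx hxA hvx, hvx⟩, fun x hx => hout x hx.1 hx.2⟩

theorem mem_setT_or_setR (hT : IsThickThetaPartitionOn G S r A D Bs Cs)
    (h4 : Free G (cycG 4)) (hmax : IsMaximalThickThetaOn G S r) (hv : v ∈ setX G S)
    (hvD : ∀ d ∈ D, ¬ G.Adj v d) (hother : ∀ j, j ≠ i → ∀ x ∈ Bs j ∪ Cs j, ¬ G.Adj v x)
    (hvA : ∀ a ∈ A, G.Adj v a) (hb : b ∈ Bs i) (hvb : G.Adj v b) :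
    v ∈ setT G S A (Bs i) (Cs i) ∨ v ∈ setR G S A (Bs i) := by
  by_cases hC : ∃ c ∈ Cs i, G.Adj v c
  · obtain ⟨c, hc, hvc⟩ := hC
    obtain ⟨a, ha⟩ := hT.A_nonempty
    have hvB : ∀ b ∈ Bs i, G.Adj v b :=
      fun b hb => hT.adj_B_of_adj_A_of_adj_C h4 hv.1 ha (hvA a ha) hc hvc hb
    have hmixed : ∃ c ∈ Cs i, ¬ G.Adj v c := by
      by_contra! hvC
      exact hv.1 (hmax.mem_of_insert (hT.insert_B hv.1 hvA hvB hvC hvD hother))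
    refine .inl ⟨hv, fun x hx => hx.elim (hvA x) (hvB x), ⟨c, hc, hvc⟩, hmixed, ?_⟩
    rintro x ⟨hx, hx'⟩
    simp only [Set.mem_union, not_or] at hx'
    exact hT.not_adj_of_not_mem hvD hother hx hx'.1.1 hx'.1.2 hx'.2
  · push Not at hC
    refine .inr ⟨hv, hvA, ⟨b, hb, hvb⟩, ?_⟩
    rintro x ⟨hx, hx'⟩
    simp only [Set.mem_union, not_or] at hx'
    by_cases hxC : x ∈ Cs i
    · exact hC x hxC
    · exact hT.not_adj_of_not_mem hvD hother hx hx'.1 hx'.2 hxC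

theorem mem_of_not_adj_D (hT : IsThickThetaPartitionOn G S r A D Bs Cs)
    (h4 : Free G (cycG 4)) (h5 : Free G (cycG 5)) (h7 : Free G (pathG 7)) (hr : 3 ≤ r)
    (hmax : IsMaximalThickThetaOn G S r) (hv : v ∈ setX G S) (hvD : ∀ d ∈ D, ¬ G.Adj v d) :
    v ∈ setL G S A ∨ ∃ i, v ∈ setT G S A (Bs i) (Cs i) ∨ v ∈ setR G S A (Bs i) := by
  by_cases hstrand : ∃ i, ∃ x ∈ Bs i ∪ Cs i, G.Adj v x
  · obtain ⟨i, x, hx, hvx⟩ := hstrand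
    have hother : ∀ j, j ≠ i → ∀ y ∈ Bs j ∪ Cs j, ¬ G.Adj v y :=
      fun j hji y hy hvy => hji (hT.eq_of_adj_of_adj h4 h5 h7 hr hmax hv.1 hvD hy hvy hx hvx)
    obtain ⟨b, hb, hvb⟩ : ∃ b ∈ Bs i, G.Adj v b := hx.elim (fun hx => ⟨x, hx, hvx⟩)
      (fun hx => hT.exists_adj_B_of_adj_C h4 h7 hr hv.1 hvD hother hx hvx)
    have hvA : ∀ a ∈ A, G.Adj v a := fun a ha => hT.adj_A_of_adj_B h7 hr hvD hother hb hvb ha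
    exact .inr ⟨i, hT.mem_setT_or_setR h4 hmax hv hvD hother hvA hb hvb⟩
  · push Not at hstrand
    exact .inl (hT.mem_setL hv hvD hstrand)

theorem not_adj_D_of_adj_A (hT : IsThickThetaPartitionOn G S r A D Bs Cs)
    (h4 : Free G (cycG 4)) (h5 : Free G (cycG 5)) (hr : 2 ≤ r) (hv : v ∈ setX G S)
    (ha : a ∈ A) (hva : G.Adj v a) (hd : d ∈ D) : ¬ G.Adj v d := by
  intro hvd
  have hvB : ∀ i, ∀ b ∈ Bs i, G.Adj v b := by
    intro i b hb
    by_contra hvb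
    obtain ⟨c, hc⟩ := hT.C_nonempty i
    by_cases hvc : G.Adj v c
    · exact hvb (hT.adj_B_of_adj_A_of_adj_C h4 hv.1 ha hva hc hvc hb)
    · exact h5.false_of_C5 hva (hT.adj_A_B ha hb) (hT.adj_B_C hb hc) (hT.adj_D_C hd hc).symm
        hvd.symm hvb hvc (hT.not_adj_A_C ha hc) (hT.not_adj_A_D ha hd)
        (fun h => hT.not_adj_D_B hd hb h.symm)
  have hvC : ∀ i, ∀ c ∈ Cs i, G.Adj v c := by
    intro i c hc
    obtain ⟨b, hb⟩ := hT.B_nonempty i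
    exact hT.swap.adj_B_of_adj_A_of_adj_C h4 hv.1 hd hvd hb (hvB i b hb) hc
  obtain ⟨i, j, hij⟩ : ∃ i j : Fin r, i ≠ j := ⟨⟨0, by omega⟩, ⟨1, hr⟩, by simp⟩
  obtain ⟨b, hb⟩ := hT.B_nonempty i
  obtain ⟨b', hb'⟩ := hT.B_nonempty j
  obtain ⟨c, hc⟩ := hT.C_nonempty i
  obtain ⟨c', hc'⟩ := hT.C_nonempty j
  obtain ⟨x, hx, hvx⟩ := hv.2.2
  rcases hT.mem_cases hx with hxA | hxD | ⟨k, hxB⟩ | ⟨k, hxC⟩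
  · exact hvx (hT.adj_A_of_adj_B_of_adj_B h4 hv.1 hij hb (hvB i b hb) hb' (hvB j b' hb') hxA)
  · exact hvx (hT.swap.adj_A_of_adj_B_of_adj_B h4 hv.1 hij hc (hvC i c hc) hc' (hvC j c' hc')
      hxD)
  · exact hvx (hvB k x hxB)
  · exact hvx (hvC k x hxC)

end IsThickThetaPartitionOn

end Paper

theorem statement_16_general {V : Type*} (G : SimpleGraph V)
    (h7 : Paper.Free G (pathG 7)) (h4 : Paper.Free G (cycG 4)) (h5 : Paper.Free G (cycG 5))
    (r : ℕ) (hr : 3 ≤ r)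
    (S : Set V) (A D : Set V) (Bs Cs : Fin r → Set V)
    (hT : IsThickThetaPartitionOn G S r A D Bs Cs)
    (hmax : ∀ S' : Set V, S ⊆ S' →
      (∃ (A' D' : Set V) (Bs' Cs' : Fin r → Set V),
        IsThickThetaPartitionOn G S' r A' D' Bs' Cs') → S' = S) :
    setX G S = setL G S A ∪ setL G S D ∪
      ⋃ i : Fin r, (setT G S A (Bs i) (Cs i) ∪ setR G S A (Bs i) ∪
        setT G S D (Cs i) (Bs i) ∪ setR G S D (Cs i)) := by
  ext v
  simp only [Set.mem_union, Set.mem_iUnion]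
  refine ⟨fun hv => ?_, ?_⟩
  · by_cases hD : ∃ d ∈ D, G.Adj v d
    · obtain ⟨d, hd, hvd⟩ := hD
      have hvA : ∀ a ∈ A, ¬ G.Adj v a :=
        fun a ha hva => hT.not_adj_D_of_adj_A h4 h5 (by omega) hv ha hva hd hvd
      rcases hT.swap.mem_of_not_adj_D h4 h5 h7 hr hmax hv hvA with h | ⟨i, h | h⟩
      exacts [.inl (.inr h), .inr ⟨i, .inl (.inr h)⟩, .inr ⟨i, .inr h⟩]
    · push Not at hD
      rcases hT.mem_of_not_adj_D h4 h5 h7 hr hmax hv hD with h | ⟨i, h | h⟩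
      exacts [.inl (.inl h), .inr ⟨i, .inl (.inl (.inl h))⟩, .inr ⟨i, .inl (.inl (.inr h))⟩]
  · rintro ((h | h) | ⟨i, ((h | h) | h) | h⟩) <;> exact h.1

theorem statement_16 {V : Type*} [Fintype V] (G : SimpleGraph V)
    (h7 : Paper.Free G (pathG 7)) (h4 : Paper.Free G (cycG 4)) (h5 : Paper.Free G (cycG 5))
    (hc7 : Paper.Free G (cycG 7))
    (r : ℕ) (hr : 3 ≤ r) (hθ : ContainsInducedOn G Set.univ (thetaG r))
    (S : Set V) (A D : Set V) (Bs Cs : Fin r → Set V)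
    (hT : IsThickThetaPartitionOn G S r A D Bs Cs)
    (hmax : ∀ S' : Set V, S ⊆ S' →
      (∃ (A' D' : Set V) (Bs' Cs' : Fin r → Set V),
        IsThickThetaPartitionOn G S' r A' D' Bs' Cs') → S' = S) :
    setX G S = setL G S A ∪ setL G S D ∪
      ⋃ i : Fin r, (setT G S A (Bs i) (Cs i) ∪ setR G S A (Bs i) ∪
        setT G S D (Cs i) (Bs i) ∪ setR G S D (Cs i)) :=
  statement_16_general G h7 h4 h5 r hr S A D Bs Cs hT hmax
end

section
/- Let R be an r-lantern (r ≥ 3). Then χ(R) = ω(R), i.e., the chromatic number of a lantern equals its clique number. -/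
open SimpleGraph

open Paper

section LanternAux

open Paper

variable {V : Type*} [Fintype V]

/-- rank of `v` among `s` with respect to a key function. -/
noncomputable def Lrk (key : V → ℕ) (s : Set V) (v : V) : ℕ :=
  {w ∈ s | key w < key v}.ncard

lemma Lrk_closed_eq (key : V → ℕ) (hkey : Function.Injective key) (s : Set V) {v : V}
    (hv : v ∈ s) : {w ∈ s | key w ≤ key v} = insert v {w ∈ s | key w < key v} := by
  ext w
  simp only [Set.mem_setOf_eq, Set.mem_insert_iff]
  constructor
  · rintro ⟨hw, hle⟩
    rcases lt_or_eq_of_le hle with hlt | heq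
    · exact Or.inr ⟨hw, hlt⟩
    · exact Or.inl (hkey heq)
  · rintro (rfl | ⟨hw, hlt⟩)
    · exact ⟨hv, le_rfl⟩
    · exact ⟨hw, hlt.le⟩

lemma Lrk_closed_card (key : V → ℕ) (hkey : Function.Injective key) (s : Set V) {v : V}
    (hv : v ∈ s) : {w ∈ s | key w ≤ key v}.ncard = Lrk key s v + 1 := by
  rw [Lrk_closed_eq key hkey s hv,
    Set.ncard_insert_of_notMem (by simp) (Set.toFinite _)]
  rfl

lemma Lrk_inj (key : V → ℕ) (hkey : Function.Injective key) (s : Set V) {u v : V}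
    (hu : u ∈ s) (hv : v ∈ s) (h : Lrk key s u = Lrk key s v) : u = v := by
  by_contra hne
  have hk : key u ≠ key v := fun hh => hne (hkey hh)
  wlog hlt : key u < key v generalizing u v
  · exact this hv hu h.symm (Ne.symm hne) hk.symm ((hk.lt_or_gt).resolve_left hlt)
  have hsub : {w ∈ s | key w ≤ key u} ⊆ {w ∈ s | key w < key v} :=
    fun w hw => ⟨hw.1, lt_of_le_of_lt hw.2 hlt⟩
  have hle := Set.ncard_le_ncard hsub (Set.toFinite _)
  rw [Lrk_closed_card key hkey s hu] at hle
  have : Lrk key s u + 1 ≤ Lrk key s v := hle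
  omega

/-- the key used to order the sets `B i`, `C i`. -/
noncomputable def lkey (G : SimpleGraph V) (Y : Set V) (v : V) : ℕ :=
  Fintype.card V * (Fintype.card V - (nbrIn G Y v).ncard) + ((Fintype.equivFin V) v : ℕ)

lemma lord_inj : Function.Injective (fun v : V => ((Fintype.equivFin V) v : ℕ)) := by
  intro u v h
  exact (Fintype.equivFin V).injective (Fin.val_injective h)

lemma lkey_inj (G : SimpleGraph V) (Y : Set V) : Function.Injective (lkey G Y) := by
  intro u v h
  unfold lkey at h
  have h1 := congrArg (fun x => x % Fintype.card V) h
  simp only [Nat.mul_add_mod] at h1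
  have hu : ((Fintype.equivFin V) u : ℕ) < Fintype.card V := ((Fintype.equivFin V) u).isLt
  have hv : ((Fintype.equivFin V) v : ℕ) < Fintype.card V := ((Fintype.equivFin V) v).isLt
  rw [Nat.mod_eq_of_lt hu, Nat.mod_eq_of_lt hv] at h1
  exact lord_inj h1

lemma lkey_mono (G : SimpleGraph V) {s Y : Set V}
    (hch : ∀ u ∈ s, ∀ v ∈ s, nbrIn G Y u ⊆ nbrIn G Y v ∨ nbrIn G Y v ⊆ nbrIn G Y u)
    {u v : V} (hu : u ∈ s) (hv : v ∈ s) (hkey : lkey G Y v ≤ lkey G Y u) :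
    nbrIn G Y u ⊆ nbrIn G Y v := by
  unfold lkey at hkey
  have hNle : ∀ w : V, (nbrIn G Y w).ncard ≤ Fintype.card V := by
    intro w
    have := Set.ncard_le_ncard (Set.subset_univ (nbrIn G Y w)) (Set.toFinite _)
    rwa [Set.ncard_univ, Nat.card_eq_fintype_card] at this
  have hLu : ((Fintype.equivFin V) u : ℕ) < Fintype.card V := ((Fintype.equivFin V) u).isLt
  have hLv : ((Fintype.equivFin V) v : ℕ) < Fintype.card V := ((Fintype.equivFin V) v).isLt
  have h1 : Fintype.card V - (nbrIn G Y v).ncard ≤ Fintype.card V - (nbrIn G Y u).ncard := by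
    by_contra hc
    push_neg at hc
    have hlt : Fintype.card V * (Fintype.card V - (nbrIn G Y u).ncard) + ((Fintype.equivFin V) u : ℕ)
        < Fintype.card V * (Fintype.card V - (nbrIn G Y v).ncard) + ((Fintype.equivFin V) v : ℕ) := by
      calc Fintype.card V * (Fintype.card V - (nbrIn G Y u).ncard) + ((Fintype.equivFin V) u : ℕ)
          < Fintype.card V * (Fintype.card V - (nbrIn G Y u).ncard) + Fintype.card V := by omega
        _ = Fintype.card V * (Fintype.card V - (nbrIn G Y u).ncard + 1) := by ring
        _ ≤ Fintype.card V * (Fintype.card V - (nbrIn G Y v).ncard) := Nat.mul_le_mul le_rfl hc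
        _ ≤ Fintype.card V * (Fintype.card V - (nbrIn G Y v).ncard) + ((Fintype.equivFin V) v : ℕ) :=
            Nat.le_add_right _ _
    omega
  have h2 : (nbrIn G Y u).ncard ≤ (nbrIn G Y v).ncard := by
    have := hNle u; have := hNle v; omega
  rcases hch u hu v hv with hss | hss
  · exact hss
  · exact (Set.eq_of_subset_of_ncard_le hss h2 (Set.toFinite _)).symm.subset

end LanternAux


theorem statement_18 {V : Type*} [Fintype V] (R : SimpleGraph V)
    (r : ℕ) (hr : 3 ≤ r) (A D : Set V) (Bs Cs : Fin r → Set V)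
    (h : IsLanternPartitionOn R Set.univ r A D Bs Cs) :
    R.chromaticNumber = (cliqueNumber R : ℕ∞) := by
  classical
  obtain ⟨hUnion, hAD, hAdisj, hBCdisj, hBB, hAne, hDne, hBCne, hAcl, hDcl, hBCcl,
    hADanti, hAB, hDC, hchain, hcomp, hanti⟩ := h
  set k := cliqueNumber R with hkdef
  -- basic clique bound : any clique has at most k vertices
  have hbdd : BddAbove {n | ∃ T : Finset V, R.IsNClique n T} := by
    refine ⟨Fintype.card V, fun n hn => ?_⟩
    obtain ⟨T, hT⟩ := hn
    calc n = T.card := hT.2.symm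
      _ ≤ Fintype.card V := Finset.card_le_univ T
  have hcliq : ∀ s : Set V, R.IsClique s → s.ncard ≤ k := by
    intro s hs
    have hfin : s.Finite := Set.toFinite s
    have hnc : R.IsNClique hfin.toFinset.card hfin.toFinset :=
      ⟨by rwa [Set.Finite.coe_toFinset], rfl⟩
    have hmem : hfin.toFinset.card ∈ {n | ∃ T : Finset V, R.IsNClique n T} := ⟨_, hnc⟩
    have hle := le_csSup hbdd hmem
    rw [Set.ncard_eq_toFinset_card s hfin]
    exact hle
  set a := A.ncard with hadef
  set d := D.ncard with hddef
  have ha1 : 1 ≤ a := (Set.ncard_pos (Set.toFinite A)).mpr hAne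
  have hd1 : 1 ≤ d := (Set.ncard_pos (Set.toFinite D)).mpr hDne
  have hak : a ≤ k := hcliq A hAcl
  have hdk : d ≤ k := hcliq D hDcl
  have hk1 : 1 ≤ k := le_trans ha1 hak
  -- uniqueness of membership
  have hBuniq : ∀ {i j : Fin r} {v : V}, v ∈ Bs i → v ∈ Bs j → i = j := by
    intro i j v hi hj
    by_contra hne
    exact Set.disjoint_left.mp (hBB i j hne).1 hi hj
  have hCuniq : ∀ {i j : Fin r} {v : V}, v ∈ Cs i → v ∈ Cs j → i = j := by
    intro i j v hi hj
    by_contra hne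
    exact Set.disjoint_left.mp (hBB i j hne).2 hi hj
  -- chain structure on every branch
  have hchainB : ∀ i : Fin r, ∀ u ∈ Bs i, ∀ v ∈ Bs i,
      nbrIn R (Cs i) u ⊆ nbrIn R (Cs i) v ∨ nbrIn R (Cs i) v ⊆ nbrIn R (Cs i) u := by
    intro i u hu v hv
    by_cases h0 : i.val = 0
    · exact (hchain i h0).1.1 u hu v hv
    · exact Or.inl (fun w hw => ⟨hw.1, hcomp i h0 v hv w hw.1⟩)
  have hchainC : ∀ i : Fin r, ∀ u ∈ Cs i, ∀ v ∈ Cs i,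
      nbrIn R (Bs i) u ⊆ nbrIn R (Bs i) v ∨ nbrIn R (Bs i) v ⊆ nbrIn R (Bs i) u := by
    intro i u hu v hv
    by_cases h0 : i.val = 0
    · exact (hchain i h0).2.1 u hu v hv
    · exact Or.inl (fun w hw => ⟨hw.1, (hcomp i h0 w hw.1 v hv).symm⟩)
  -- the color function
  set Lf : V → ℕ := fun v => ((Fintype.equivFin V) v : ℕ) with hLf
  have hLinj : Function.Injective Lf := lord_inj
  set col : V → ℕ := fun v =>
    if v ∈ A then Lrk Lf A v
    else if v ∈ D then k - 1 - Lrk Lf D v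
    else if h : ∃ i, v ∈ Bs i then k - 1 - Lrk (lkey R (Cs h.choose)) (Bs h.choose) v
    else if h : ∃ i, v ∈ Cs i then Lrk (lkey R (Bs h.choose)) (Cs h.choose) v
    else 0 with hcol
  -- characterization of col on each part
  have hcolA : ∀ v ∈ A, col v = Lrk Lf A v := by
    intro v hv; rw [hcol]; simp only [if_pos hv]
  have hcolD : ∀ v ∈ D, col v = k - 1 - Lrk Lf D v := by
    intro v hv
    have hvA : v ∉ A := Set.disjoint_right.mp hAD hv
    rw [hcol]; simp only [if_neg hvA, if_pos hv]
  have hcolB : ∀ (i : Fin r), ∀ v ∈ Bs i,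
      col v = k - 1 - Lrk (lkey R (Cs i)) (Bs i) v := by
    intro i v hv
    have hvA : v ∉ A := Set.disjoint_right.mp (hAdisj i).1 hv
    have hvD : v ∉ D := Set.disjoint_right.mp (hAdisj i).2.2.1 hv
    have hex : ∃ j, v ∈ Bs j := ⟨i, hv⟩
    have hch : hex.choose = i := hBuniq hex.choose_spec hv
    rw [hcol]
    simp only [if_neg hvA, if_neg hvD, dif_pos hex, hch]
  have hcolC : ∀ (i : Fin r), ∀ v ∈ Cs i,
      col v = Lrk (lkey R (Bs i)) (Cs i) v := by
    intro i v hv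
    have hvA : v ∉ A := Set.disjoint_right.mp (hAdisj i).2.1 hv
    have hvD : v ∉ D := Set.disjoint_right.mp (hAdisj i).2.2.2 hv
    have hvB : ¬ ∃ j, v ∈ Bs j := by
      rintro ⟨j, hj⟩
      exact Set.disjoint_left.mp (hBCdisj j i) hj hv
    have hex : ∃ j, v ∈ Cs j := ⟨i, hv⟩
    have hch : hex.choose = i := hCuniq hex.choose_spec hv
    rw [hcol]
    simp only [if_neg hvA, if_neg hvD, dif_neg hvB, dif_pos hex, hch]
  -- rank bounds
  have hAbound : ∀ v ∈ A, Lrk Lf A v + 1 ≤ a := by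
    intro v hv
    have hsub : {w ∈ A | Lf w ≤ Lf v} ⊆ A := Set.sep_subset _ _
    have := Set.ncard_le_ncard hsub (Set.toFinite _)
    rwa [Lrk_closed_card Lf hLinj A hv] at this
  have hDbound : ∀ v ∈ D, Lrk Lf D v + 1 ≤ d := by
    intro v hv
    have hsub : {w ∈ D | Lf w ≤ Lf v} ⊆ D := Set.sep_subset _ _
    have := Set.ncard_le_ncard hsub (Set.toFinite _)
    rwa [Lrk_closed_card Lf hLinj D hv] at this
  have hBbound : ∀ (i : Fin r), ∀ v ∈ Bs i,
      Lrk (lkey R (Cs i)) (Bs i) v + 1 + a ≤ k := by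
    intro i v hv
    set key := lkey R (Cs i) with hkey
    have hkinj : Function.Injective key := lkey_inj R (Cs i)
    set Bb := {w ∈ Bs i | key w ≤ key v} with hBb
    have hBbsub : Bb ⊆ Bs i := Set.sep_subset _ _
    have hclS : R.IsClique (A ∪ Bb) := by
      intro x hx y hy hxy
      rcases hx with hx | hx
      · rcases hy with hy | hy
        · exact hAcl hx hy hxy
        · exact (hAB i).1 x hx y (hBbsub hy)
      · rcases hy with hy | hy
        · exact ((hAB i).1 y hy x (hBbsub hx)).symm
        · exact (hBCcl i).1.subset hBbsub hx hy hxy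
    have hdisj : Disjoint A Bb := (hAdisj i).1.mono_right hBbsub
    have hcardS := hcliq (A ∪ Bb) hclS
    rw [Set.ncard_union_eq hdisj (Set.toFinite _) (Set.toFinite _)] at hcardS
    rw [hBb, Lrk_closed_card key hkinj (Bs i) hv] at hcardS
    omega
  have hCbound : ∀ (i : Fin r), ∀ v ∈ Cs i,
      Lrk (lkey R (Bs i)) (Cs i) v + 1 + d ≤ k := by
    intro i v hv
    set key := lkey R (Bs i) with hkey
    have hkinj : Function.Injective key := lkey_inj R (Bs i)
    set Cc := {w ∈ Cs i | key w ≤ key v} with hCc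
    have hCcsub : Cc ⊆ Cs i := Set.sep_subset _ _
    have hclS : R.IsClique (D ∪ Cc) := by
      intro x hx y hy hxy
      rcases hx with hx | hx
      · rcases hy with hy | hy
        · exact hDcl hx hy hxy
        · exact (hDC i).1 x hx y (hCcsub hy)
      · rcases hy with hy | hy
        · exact ((hDC i).1 y hy x (hCcsub hx)).symm
        · exact (hBCcl i).2.subset hCcsub hx hy hxy
    have hdisj : Disjoint D Cc := (hAdisj i).2.2.2.mono_right hCcsub
    have hcardS := hcliq (D ∪ Cc) hclS
    rw [Set.ncard_union_eq hdisj (Set.toFinite _) (Set.toFinite _)] at hcardS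
    rw [hCc, Lrk_closed_card key hkinj (Cs i) hv] at hcardS
    omega
  have hBCbound : ∀ (i : Fin r), ∀ b ∈ Bs i, ∀ c ∈ Cs i, R.Adj b c →
      Lrk (lkey R (Cs i)) (Bs i) b + Lrk (lkey R (Bs i)) (Cs i) c + 2 ≤ k := by
    intro i b hb c hc hadj
    set keyB := lkey R (Cs i) with hkeyB
    set keyC := lkey R (Bs i) with hkeyC
    set Bb := {w ∈ Bs i | keyB w ≤ keyB b} with hBb
    set Cc := {w ∈ Cs i | keyC w ≤ keyC c} with hCc
    have hBbsub : Bb ⊆ Bs i := Set.sep_subset _ _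
    have hCcsub : Cc ⊆ Cs i := Set.sep_subset _ _
    have hclS : R.IsClique (Bb ∪ Cc) := by
      intro x hx y hy hxy
      rcases hx with hx | hx
      · rcases hy with hy | hy
        · exact (hBCcl i).1.subset hBbsub hx hy hxy
        · -- x ∈ Bb, y ∈ Cc
          have hsubB : nbrIn R (Cs i) b ⊆ nbrIn R (Cs i) x :=
            lkey_mono R (hchainB i) hb (hBbsub hx) hx.2
          have hxc : R.Adj x c := (hsubB ⟨hc, hadj⟩).2
          have hsubC : nbrIn R (Bs i) c ⊆ nbrIn R (Bs i) y :=
            lkey_mono R (hchainC i) hc (hCcsub hy) hy.2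
          exact ((hsubC ⟨hBbsub hx, hxc.symm⟩).2).symm
      · rcases hy with hy | hy
        · have hsubB : nbrIn R (Cs i) b ⊆ nbrIn R (Cs i) y :=
            lkey_mono R (hchainB i) hb (hBbsub hy) hy.2
          have hyc : R.Adj y c := (hsubB ⟨hc, hadj⟩).2
          have hsubC : nbrIn R (Bs i) c ⊆ nbrIn R (Bs i) x :=
            lkey_mono R (hchainC i) hc (hCcsub hx) hx.2
          exact (hsubC ⟨hBbsub hy, hyc.symm⟩).2
        · exact (hBCcl i).2.subset hCcsub hx hy hxy
    have hdisj : Disjoint Bb Cc := ((hBCdisj i i).mono hBbsub hCcsub)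
    have hcardS := hcliq (Bb ∪ Cc) hclS
    rw [Set.ncard_union_eq hdisj (Set.toFinite _) (Set.toFinite _)] at hcardS
    rw [hBb, Lrk_closed_card keyB (lkey_inj R (Cs i)) (Bs i) hb] at hcardS
    rw [hCc, Lrk_closed_card keyC (lkey_inj R (Bs i)) (Cs i) hc] at hcardS
    omega
  -- every vertex lies in one of the parts
  have hloc : ∀ v : V, v ∈ A ∨ v ∈ D ∨ (∃ i, v ∈ Bs i) ∨ (∃ i, v ∈ Cs i) := by
    intro v
    have hv : v ∈ A ∪ D ∪ (⋃ i, Bs i) ∪ (⋃ i, Cs i) := by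
      rw [hUnion]; exact Set.mem_univ v
    simp only [Set.mem_union, Set.mem_iUnion] at hv
    tauto
  -- the coloring is proper
  have hproper : ∀ u v : V, R.Adj u v → col u ≠ col v := by
    intro u v hadj heq
    have hne : u ≠ v := hadj.ne
    rcases hloc u with hu | hu | ⟨i, hu⟩ | ⟨i, hu⟩ <;>
      rcases hloc v with hv | hv | ⟨j, hv⟩ | ⟨j, hv⟩
    · -- A A
      rw [hcolA u hu, hcolA v hv] at heq
      exact hne (Lrk_inj Lf hLinj A hu hv heq)
    · exact hADanti u hu v hv hadj
    · -- A B
      rw [hcolA u hu, hcolB j v hv] at heq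
      have h1 := hAbound u hu
      have h2 := hBbound j v hv
      omega
    · exact (hAB j).2 u hu v hv hadj
    · exact hADanti v hv u hu hadj.symm
    · -- D D
      rw [hcolD u hu, hcolD v hv] at heq
      have h1 := hDbound u hu
      have h2 := hDbound v hv
      have : Lrk Lf D u = Lrk Lf D v := by omega
      exact hne (Lrk_inj Lf hLinj D hu hv this)
    · exact (hDC j).2 u hu v hv hadj
    · -- D C
      rw [hcolD u hu, hcolC j v hv] at heq
      have h1 := hDbound u hu
      have h2 := hCbound j v hv
      omega
    · -- B A
      rw [hcolB i u hu, hcolA v hv] at heq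
      have h1 := hAbound v hv
      have h2 := hBbound i u hu
      omega
    · exact (hDC i).2 v hv u hu hadj.symm
    · -- B B
      by_cases hij : i = j
      · subst hij
        rw [hcolB i u hu, hcolB i v hv] at heq
        have h1 := hBbound i u hu
        have h2 := hBbound i v hv
        have : Lrk (lkey R (Cs i)) (Bs i) u = Lrk (lkey R (Cs i)) (Bs i) v := by omega
        exact hne (Lrk_inj _ (lkey_inj R (Cs i)) (Bs i) hu hv this)
      · exact hanti i j hij u (Or.inl hu) v (Or.inl hv) hadj
    · -- B C
      by_cases hij : i = j
      · subst hij
        rw [hcolB i u hu, hcolC i v hv] at heq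
        have h1 := hBCbound i u hu v hv hadj
        omega
      · exact hanti i j hij u (Or.inl hu) v (Or.inr hv) hadj
    · exact (hAB i).2 v hv u hu hadj.symm
    · -- C D
      rw [hcolC i u hu, hcolD v hv] at heq
      have h1 := hDbound v hv
      have h2 := hCbound i u hu
      omega
    · -- C B
      by_cases hij : i = j
      · subst hij
        rw [hcolC i u hu, hcolB i v hv] at heq
        have h1 := hBCbound i v hv u hu hadj.symm
        omega
      · exact hanti i j hij u (Or.inr hu) v (Or.inl hv) hadj
    · -- C C
      by_cases hij : i = j
      · subst hij
        rw [hcolC i u hu, hcolC i v hv] at heq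
        exact hne (Lrk_inj _ (lkey_inj R (Bs i)) (Cs i) hu hv heq)
      · exact hanti i j hij u (Or.inr hu) v (Or.inr hv) hadj
  -- all colors are < k
  have hlt : ∀ v : V, col v < k := by
    intro v
    rcases hloc v with hv | hv | ⟨i, hv⟩ | ⟨i, hv⟩
    · rw [hcolA v hv]; have := hAbound v hv; omega
    · rw [hcolD v hv]; have := hDbound v hv; omega
    · rw [hcolB i v hv]; have := hBbound i v hv; omega
    · rw [hcolC i v hv]; have := hCbound i v hv; omega
  have hcolorable : R.Colorable k := by
    refine ⟨SimpleGraph.Coloring.mk (fun v => (⟨col v, hlt v⟩ : Fin k)) ?_⟩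
    intro u v hadj
    simp only [ne_eq, Fin.mk.injEq]
    exact hproper u v hadj
  -- lower bound: a clique of size k exists
  have hset_ne : {n | ∃ T : Finset V, R.IsNClique n T}.Nonempty := by
    refine ⟨0, ∅, ?_⟩
    constructor
    · simp [SimpleGraph.IsClique]
    · simp
  have hKmem : k ∈ {n | ∃ T : Finset V, R.IsNClique n T} := by
    rw [hkdef]
    unfold Paper.cliqueNumber
    exact Nat.sSup_mem hset_ne hbdd
  obtain ⟨T, hT⟩ := hKmem
  have hlow : (k : ℕ∞) ≤ R.chromaticNumber := by
    have := hT.1.card_le_chromaticNumber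
    rwa [hT.2] at this
  exact le_antisymm hcolorable.chromaticNumber_le hlow
end
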